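/- arXiv:1803.09445 — 6 statements merged into one kernel-verified Lean document; each statement's English description precedes it below -/
import Mathlib

section
/- For 0 < q < 1 and a positive integer l: ∑_{n=0}^∞ (−1)^n q^{(2n+1)(l+1/2)}/(1 − q^{2n+1}) = −∑_{j=0}^{l−1} q^{j+1/2}/(1 + q^{2j+1}) + ∑_{n=0}^∞ (−1)^n q^{(2n+1)/2}/(1 − q^{2n+1}). -/
lemma aux_summable (r : ℝ) (h0 : 0 < r) (h1 : r < 1) (m : ℕ) (hm : 1 ≤ m) :
    Summable (fun n : ℕ => (-1:ℝ)^n * r^((2*n+1)*m) / (1 - (r^2)^(2*n+1))) := by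
  have hr2 : r^2 < 1 := by nlinarith
  have hr2' : (0:ℝ) < r^2 := by positivity
  apply Summable.of_norm_bounded (g := fun n : ℕ => r^n * (1 - r^2)⁻¹)
  · exact (summable_geometric_of_lt_one h0.le h1).mul_right _
  · intro n
    have hd : 1 - r^2 ≤ 1 - (r^2)^(2*n+1) := by
      have : (r^2)^(2*n+1) ≤ r^2 := by
        calc (r^2)^(2*n+1) ≤ (r^2)^1 := pow_le_pow_of_le_one hr2'.le hr2.le (by omega)
        _ = r^2 := pow_one _
      linarith
    have hdpos : 0 < 1 - (r^2)^(2*n+1) := by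
      have : (r^2)^(2*n+1) < 1 := pow_lt_one₀ hr2'.le hr2 (by omega)
      linarith
    have hnum : r^((2*n+1)*m) ≤ r^n :=
      pow_le_pow_of_le_one h0.le h1.le (by nlinarith)
    rw [Real.norm_eq_abs, abs_div, abs_mul, abs_pow, abs_neg, abs_one, one_pow, one_mul,
      abs_of_pos (by positivity : (0:ℝ) < r^((2*n+1)*m)), abs_of_pos hdpos]
    rw [div_eq_mul_inv]
    gcongr

lemma aux_step (r : ℝ) (h0 : 0 < r) (h1 : r < 1) (l : ℕ) :
    (∑' n : ℕ, (-1:ℝ)^n * r^((2*n+1)*(2*(l+1)+1)) / (1 - (r^2)^(2*n+1)))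
      = (∑' n : ℕ, (-1:ℝ)^n * r^((2*n+1)*(2*l+1)) / (1 - (r^2)^(2*n+1)))
        - r^(2*l+1) / (1 + (r^2)^(2*l+1)) := by
  have hr2 : r^2 < 1 := by nlinarith
  have hr2' : (0:ℝ) < r^2 := by positivity
  have hs1 := aux_summable r h0 h1 (2*l+1) (by omega)
  have hs2 := aux_summable r h0 h1 (2*(l+1)+1) (by omega)
  have key : (∑' n : ℕ, ((-1:ℝ)^n * r^((2*n+1)*(2*l+1)) / (1 - (r^2)^(2*n+1))
      - (-1:ℝ)^n * r^((2*n+1)*(2*(l+1)+1)) / (1 - (r^2)^(2*n+1))))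
      = r^(2*l+1) / (1 + (r^2)^(2*l+1)) := by
    have hpt : ∀ n : ℕ, (-1:ℝ)^n * r^((2*n+1)*(2*l+1)) / (1 - (r^2)^(2*n+1))
        - (-1:ℝ)^n * r^((2*n+1)*(2*(l+1)+1)) / (1 - (r^2)^(2*n+1))
        = (-(r^(2*l+1))^2)^n * r^(2*l+1) := by
      intro n
      have hdne : (1 - (r^2)^(2*n+1)) ≠ 0 := by
        have : (r^2)^(2*n+1) < 1 := pow_lt_one₀ hr2'.le hr2 (by omega)
        linarith
      have he : r^((2*n+1)*(2*(l+1)+1)) = r^((2*n+1)*(2*l+1)) * (r^2)^(2*n+1) := by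
        rw [← pow_mul, ← pow_add]
        ring_nf
      rw [he, div_sub_div_same]
      have : (-1:ℝ)^n * r^((2*n+1)*(2*l+1)) - (-1:ℝ)^n * (r^((2*n+1)*(2*l+1)) * (r^2)^(2*n+1))
          = (-1:ℝ)^n * r^((2*n+1)*(2*l+1)) * (1 - (r^2)^(2*n+1)) := by ring
      rw [this, mul_div_assoc, div_self hdne, mul_one]
      have : r^((2*n+1)*(2*l+1)) = (r^(2*l+1))^(2*n+1) := by
        rw [← pow_mul]; ring_nf
      rw [this]
      have hx : ((-1:ℝ))^n * (r^(2*l+1))^(2*n+1)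
          = (-(r^(2*l+1))^2)^n * r^(2*l+1) := by
        rw [neg_pow, ← pow_mul]
        ring
      rw [hx]
    rw [tsum_congr hpt, tsum_mul_right]
    have hx1 : ‖-(r^(2*l+1))^2‖ < 1 := by
      rw [norm_neg, norm_pow, Real.norm_eq_abs, abs_of_pos (pow_pos h0 _)]
      have h3 : r^(2*l+1) ≤ r := by
        calc r^(2*l+1) ≤ r^1 := pow_le_pow_of_le_one h0.le h1.le (by omega)
        _ = r := pow_one r
      nlinarith [pow_pos h0 (2*l+1)]
    rw [tsum_geometric_of_norm_lt_one hx1]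
    rw [sub_neg_eq_add, inv_mul_eq_div,
      show ((r:ℝ)^(2*l+1))^2 = (r^2)^(2*l+1) by rw [← pow_mul, ← pow_mul]; ring_nf]
  have := Summable.tsum_sub hs1 hs2
  rw [key] at this
  linarith [this]

lemma aux_main (r : ℝ) (h0 : 0 < r) (h1 : r < 1) (l : ℕ) :
    (∑' n : ℕ, (-1:ℝ)^n * r^((2*n+1)*(2*l+1)) / (1 - (r^2)^(2*n+1)))
      = (∑' n : ℕ, (-1:ℝ)^n * r^(2*n+1) / (1 - (r^2)^(2*n+1)))
        - ∑ j ∈ Finset.range l, r^(2*j+1) / (1 + (r^2)^(2*j+1)) := by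
  induction l with
  | zero => simp
  | succ k ih =>
    rw [aux_step r h0 h1 k, ih, Finset.sum_range_succ]
    ring

theorem stmt4 (q : ℝ) (hq : 0 < q) (hq1 : q < 1) (l : ℕ) (hl : 1 ≤ l) :
    ∑' n : ℕ, (-1 : ℝ) ^ n * (Real.sqrt q) ^ ((2 * n + 1) * (2 * l + 1)) / (1 - q ^ (2 * n + 1))
      = -(∑ j ∈ Finset.range l, (Real.sqrt q) ^ (2 * j + 1) / (1 + q ^ (2 * j + 1)))
        + ∑' n : ℕ, (-1 : ℝ) ^ n * (Real.sqrt q) ^ (2 * n + 1) / (1 - q ^ (2 * n + 1)) := by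
  set r := Real.sqrt q with hr
  have hq2 : r ^ 2 = q := Real.sq_sqrt hq.le
  have h0 : 0 < r := Real.sqrt_pos.mpr hq
  have h1 : r < 1 := by
    rw [hr]
    calc Real.sqrt q < Real.sqrt 1 := Real.sqrt_lt_sqrt hq.le hq1
    _ = 1 := Real.sqrt_one
  rw [← hq2]
  have := aux_main r h0 h1 l
  linarith [this]
end

section
/- For 0 < q < 1 and a positive integer a: −2 log(q) ∑_{n=1}^{a−1} q^n/(1 − q^{2n}) + 2 log(q) ∑_{n=1}^∞ q^n/(1 − q^{2n}) equals 2 q^a log(q)/(1 − q^{2a}) + 2 log(q) ∑_{n=1}^∞ q^n · #{d : d ∣ n, d > a, n/d odd} — i.e. the telescoped form of the derivative of the modular angle: θ'(a+1) − θ'(a) = −2 q^a log(q)/(1 − q^{2a}) where θ'(a) := 2q^a log(q)/(1−q^{2a}) + 2 log(q) ∑_{n≥1} q^n #{d ∣ n : d > a, n/d odd}. -/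
/-!
Splitting off the divisor `d = a + 1` gives `c_a(n) = c_{a+1}(n) + [a + 1 ∣ n, n / (a + 1) odd]`,
so the two `q`-series differ by the sum of `q ^ n` over the odd multiples `n` of `a + 1`, which is
the geometric series `q ^ (a + 1) / (1 - q ^ (2 (a + 1)))`. This cancels the new boundary term of
`F (a + 1)`, leaving minus the old boundary term of `F a`.
-/

open Finset

/-- The divisors counted by `c_a(n)`; reducible, so that rewriting matches the unfolded filter. -/
abbrev oddQuotientDivisorsAbove (a n : ℕ) : Finset ℕ :=
  n.divisors.filter (fun d => a < d ∧ Odd (n / d))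

theorem card_filter_lt_and_eq_card_filter_succ_lt_and_add (s : Finset ℕ) (p : ℕ → Prop)
    [DecidablePred p] (a : ℕ) :
    #(s.filter (fun d => a < d ∧ p d))
      = #(s.filter (fun d => a + 1 < d ∧ p d)) + if a + 1 ∈ s ∧ p (a + 1) then 1 else 0 := by
  have hsplit : ∀ d, (if a < d ∧ p d then 1 else 0)
      = (if a + 1 < d ∧ p d then 1 else 0) + if d = a + 1 then (if p d then 1 else 0) else 0 := by
    intro d
    rcases lt_trichotomy d (a + 1) with h | rfl | h
    · simp [show ¬ a < d by omega, show ¬ a + 1 < d by omega, h.ne]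
    · simp
    · simp [show a < d by omega, h, h.ne']
  rw [card_filter, card_filter, sum_congr rfl fun d _ => hsplit d, sum_add_distrib, sum_ite_eq',
    ite_and]

theorem card_oddQuotientDivisorsAbove_eq_succ_add {n : ℕ} (hn : n ≠ 0) (a : ℕ) :
    #(oddQuotientDivisorsAbove a n)
      = #(oddQuotientDivisorsAbove (a + 1) n)
        + if a + 1 ∣ n ∧ Odd (n / (a + 1)) then 1 else 0 := by
  rw [card_filter_lt_and_eq_card_filter_succ_lt_and_add]
  simp only [Nat.mem_divisors, hn, ne_eq, not_false_eq_true, and_true]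

theorem card_oddQuotientDivisorsAbove_le (a n : ℕ) : #(oddQuotientDivisorsAbove a n) ≤ n :=
  (card_filter_le _ _).trans (Nat.card_divisors_le_self n)

variable {K : Type*} [NormedField K] {q : K}

theorem hasSum_ite_dvd_odd_div_pow (hq : ‖q‖ < 1) {m : ℕ} (hm : m ≠ 0) :
    HasSum (fun n => if m ∣ n ∧ Odd (n / m) then q ^ n else 0) (q ^ m / (1 - q ^ (2 * m))) := by
  have hinj : Function.Injective fun k : ℕ => m * (2 * k + 1) := fun k l h => by
    simpa using Nat.eq_of_mul_eq_mul_left (Nat.pos_of_ne_zero hm) h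
  rw [← hinj.hasSum_iff]
  · have hq2m : ‖q ^ (2 * m)‖ < 1 := by
      rw [norm_pow]
      exact pow_lt_one₀ (norm_nonneg q) hq (by omega)
    have hgeom := (hasSum_geometric_of_norm_lt_one hq2m).mul_left (q ^ m)
    have hterm :
        ((fun n => if m ∣ n ∧ Odd (n / m) then q ^ n else 0) ∘ fun k => m * (2 * k + 1))
          = fun k => q ^ m * (q ^ (2 * m)) ^ k := by
      ext k
      have hodd : Odd (m * (2 * k + 1) / m) := by
        rw [Nat.mul_div_cancel_left _ (Nat.pos_of_ne_zero hm)]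
        exact odd_two_mul_add_one k
      rw [Function.comp_apply, if_pos ⟨dvd_mul_right _ _, hodd⟩, ← pow_mul, ← pow_add]
      ring_nf
    rwa [hterm, div_eq_mul_inv]
  · rintro n hnot
    rw [if_neg]
    rintro ⟨⟨c, rfl⟩, k, hk⟩
    rw [Nat.mul_div_cancel_left _ (Nat.pos_of_ne_zero hm)] at hk
    exact hnot ⟨k, by rw [hk]⟩

variable [CompleteSpace K]

theorem summable_pow_succ_mul_card_oddQuotientDivisorsAbove (hq : ‖q‖ < 1) (a : ℕ) :
    Summable fun n : ℕ => q ^ (n + 1) * (#(oddQuotientDivisorsAbove a (n + 1)) : K) := by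
  have hbound : Summable fun n : ℕ => ((n + 1 : ℕ) : ℝ) * ‖q‖ ^ (n + 1) := by
    have hq' : ‖‖q‖‖ < 1 := by rwa [norm_norm]
    simpa using
      (summable_nat_add_iff 1).mpr (summable_pow_mul_geometric_of_norm_lt_one (R := ℝ) 1 hq')
  refine Summable.of_norm_bounded hbound fun n => ?_
  have hcard : ‖(#(oddQuotientDivisorsAbove a (n + 1)) : K)‖ ≤ ((n + 1 : ℕ) : ℝ) :=
    (Nat.norm_cast_le _).trans <| by
      rw [norm_one, mul_one]
      exact_mod_cast card_oddQuotientDivisorsAbove_le a (n + 1)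
  rw [norm_mul, norm_pow, mul_comm]
  exact mul_le_mul_of_nonneg_right hcard (by positivity)

theorem tsum_pow_succ_mul_card_oddQuotientDivisorsAbove_eq_succ_add (hq : ‖q‖ < 1) (a : ℕ) :
    ∑' n : ℕ, q ^ (n + 1) * (#(oddQuotientDivisorsAbove a (n + 1)) : K)
      = ∑' n : ℕ, q ^ (n + 1) * (#(oddQuotientDivisorsAbove (a + 1) (n + 1)) : K)
        + q ^ (a + 1) / (1 - q ^ (2 * (a + 1))) := by
  have hmultiples := (hasSum_nat_add_iff' 1).mpr (hasSum_ite_dvd_odd_div_pow hq a.succ_ne_zero)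
  simp only [range_one, sum_singleton, Nat.zero_div, Nat.not_odd_zero, and_false, if_false,
    sub_zero] at hmultiples
  rw [← ((summable_pow_succ_mul_card_oddQuotientDivisorsAbove hq (a + 1)).hasSum.add
    hmultiples).tsum_eq]
  refine tsum_congr fun n => ?_
  rw [card_oddQuotientDivisorsAbove_eq_succ_add n.succ_ne_zero]
  split_ifs <;> push_cast <;> ring

theorem stmt5_general (q : ℝ) (hq : 0 < q) (hq1 : q < 1) (a : ℕ) :
    (2 * q ^ (a + 1) * Real.log q / (1 - q ^ (2 * (a + 1)))
        + 2 * Real.log q * ∑' n : ℕ, q ^ (n + 1) *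
            (((n + 1).divisors.filter (fun d => a + 1 < d ∧ Odd ((n + 1) / d))).card : ℝ))
      - (2 * q ^ a * Real.log q / (1 - q ^ (2 * a))
        + 2 * Real.log q * ∑' n : ℕ, q ^ (n + 1) *
            (((n + 1).divisors.filter (fun d => a < d ∧ Odd ((n + 1) / d))).card : ℝ))
      = -2 * q ^ a * Real.log q / (1 - q ^ (2 * a)) := by
  have hq' : ‖q‖ < 1 := by rwa [Real.norm_of_nonneg hq.le]
  rw [tsum_pow_succ_mul_card_oddQuotientDivisorsAbove_eq_succ_add hq' a]
  ring

theorem stmt5 (q : ℝ) (hq : 0 < q) (hq1 : q < 1) (a : ℕ) (ha : 1 ≤ a) :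
    (2 * q ^ (a + 1) * Real.log q / (1 - q ^ (2 * (a + 1)))
        + 2 * Real.log q * ∑' n : ℕ, q ^ (n + 1) *
            (((n + 1).divisors.filter (fun d => a + 1 < d ∧ Odd ((n + 1) / d))).card : ℝ))
      - (2 * q ^ a * Real.log q / (1 - q ^ (2 * a))
        + 2 * Real.log q * ∑' n : ℕ, q ^ (n + 1) *
            (((n + 1).divisors.filter (fun d => a < d ∧ Odd ((n + 1) / d))).card : ℝ))
      = -2 * q ^ a * Real.log q / (1 - q ^ (2 * a)) :=
  stmt5_general q hq hq1 a
end

section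
/- For 0 < q < 1 and positive integer a ≥ 1, with r > 0 such that q = e^{−π√r}: ∑_{n=0}^∞ e^{−π(n+1/2)(2a−1)√r} / sinh((n+1/2)π√r) = −∑_{n=1}^{a−1} 1/sinh(π n √r) + 2 ∑_{n=0}^∞ 1/(e^{π(2n+1)√r} − 1). -/
open Real

lemma geomsum (q : ℝ) (hq0 : 0 < q) (hq1 : q < 1) (a : ℕ) (ha : 1 ≤ a) :
    Summable (fun n : ℕ => q ^ ((2 * n + 1) * a)) := by
  have key : ∀ n : ℕ, q ^ ((2 * n + 1) * a) = q ^ a * (q ^ (2 * a)) ^ n := by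
    intro n
    rw [← pow_mul, ← pow_add]
    ring_nf
  have h2a : q ^ (2 * a) < 1 := pow_lt_one₀ hq0.le hq1 (by omega)
  have := (summable_geometric_of_lt_one (pow_nonneg hq0.le _) h2a).mul_left (q ^ a)
  exact this.congr (fun n => (key n).symm)

lemma sumS (q : ℝ) (hq0 : 0 < q) (hq1 : q < 1) (a : ℕ) (ha : 1 ≤ a) :
    Summable (fun n : ℕ => q ^ ((2 * n + 1) * a) / (1 - q ^ (2 * n + 1))) := by
  have hqn : ∀ n : ℕ, q ^ (2 * n + 1) ≤ q := by
    intro n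
    have := pow_le_pow_of_le_one hq0.le hq1.le (show 1 ≤ 2 * n + 1 by omega)
    simpa using this
  apply Summable.of_nonneg_of_le
  · intro n
    apply div_nonneg (pow_nonneg hq0.le _)
    have : q ^ (2 * n + 1) < 1 := pow_lt_one₀ hq0.le hq1 (by omega)
    linarith
  · intro n
    have h1 : 0 < 1 - q := by linarith
    have h2 : 1 - q ≤ 1 - q ^ (2 * n + 1) := by linarith [hqn n]
    exact div_le_div_of_nonneg_left (pow_nonneg hq0.le _) h1 h2
  · exact (geomsum q hq0 hq1 a ha).div_const (1 - q)

lemma qlt1 (q : ℝ) (hq0 : 0 < q) (hq1 : q < 1) (k : ℕ) (hk : 1 ≤ k) : q ^ k < 1 :=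
  pow_lt_one₀ hq0.le hq1 (by omega)

lemma keyind (q : ℝ) (hq0 : 0 < q) (hq1 : q < 1) (a : ℕ) (ha1 : 1 ≤ a) :
    ∑' n : ℕ, q ^ ((2 * n + 1) * a) / (1 - q ^ (2 * n + 1))
      = -(∑ n ∈ Finset.range (a - 1), q ^ (n + 1) / (1 - q ^ (2 * (n + 1))))
        + ∑' n : ℕ, q ^ (2 * n + 1) / (1 - q ^ (2 * n + 1)) := by
  induction a, ha1 using Nat.le_induction with
  | base =>
    simp [mul_one]
  | succ a ha ih =>
    have hstep : ∑' n : ℕ, q ^ ((2 * n + 1) * (a + 1)) / (1 - q ^ (2 * n + 1))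
        = (∑' n : ℕ, q ^ ((2 * n + 1) * a) / (1 - q ^ (2 * n + 1))) - q ^ a / (1 - q ^ (2 * a)) := by
      have hsub : (∑' n : ℕ, q ^ ((2 * n + 1) * a) / (1 - q ^ (2 * n + 1)))
          - (∑' n : ℕ, q ^ ((2 * n + 1) * (a + 1)) / (1 - q ^ (2 * n + 1)))
          = ∑' n : ℕ, q ^ ((2 * n + 1) * a) := by
        rw [← Summable.tsum_sub (sumS q hq0 hq1 a ha) (sumS q hq0 hq1 (a + 1) (by omega))]
        apply tsum_congr
        intro n
        have hne : 1 - q ^ (2 * n + 1) ≠ 0 := by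
          have := qlt1 q hq0 hq1 (2 * n + 1) (by omega)
          linarith
        field_simp
        ring
      have hgeo : ∑' n : ℕ, q ^ ((2 * n + 1) * a) = q ^ a / (1 - q ^ (2 * a)) := by
        have key : ∀ n : ℕ, q ^ ((2 * n + 1) * a) = q ^ a * (q ^ (2 * a)) ^ n := by
          intro n; rw [← pow_mul, ← pow_add]; ring_nf
        rw [tsum_congr key, tsum_mul_left,
          tsum_geometric_of_lt_one (pow_nonneg hq0.le _) (qlt1 q hq0 hq1 (2*a) (by omega))]
        rw [div_eq_mul_inv]
      linarith [hsub, hgeo]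
    rw [hstep, ih, show a + 1 - 1 = (a - 1) + 1 by omega, Finset.sum_range_succ]
    have : (a - 1 : ℕ) + 1 = a := by omega
    rw [this]
    ring

lemma frac1 (x c : ℝ) (hx : 0 < x) :
    Real.exp (-(c * x)) / Real.sinh x
      = 2 * (Real.exp (-((c + 1) * x)) / (1 - Real.exp (-(2 * x)))) := by
  have hs : Real.sinh x ≠ 0 := (Real.sinh_pos_iff.2 hx).ne'
  have hd : 1 - Real.exp (-(2 * x)) ≠ 0 := by
    have : Real.exp (-(2 * x)) < 1 := by
      rw [Real.exp_lt_one_iff]; linarith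
    linarith
  rw [Real.sinh_eq] at *
  field_simp
  have hne : Real.exp x - Real.exp (-x) ≠ 0 := by
    have h2 : Real.exp (-x) < Real.exp x := Real.exp_lt_exp.2 (by linarith)
    linarith
  rw [div_eq_iff hne]
  have e1 : Real.exp (-(c * x)) * Real.exp (-(2 * x))
      = Real.exp (-((c + 1) * x)) * Real.exp (-x) := by
    rw [← Real.exp_add, ← Real.exp_add]; ring_nf
  have e2 : Real.exp (-(c * x)) = Real.exp (-((c + 1) * x)) * Real.exp x := by
    rw [← Real.exp_add]; ring_nf
  rw [show x * (c + 1) = (c + 1) * x by ring, show x * 2 = 2 * x by ring, div_mul_eq_mul_div,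
    eq_div_iff hd]
  linear_combination e2 - e1

lemma frac2 (y : ℝ) (hy : 0 < y) :
    1 / (Real.exp y - 1) = Real.exp (-y) / (1 - Real.exp (-y)) := by
  have h1 : (1:ℝ) < Real.exp y := by rw [Real.one_lt_exp_iff]; exact hy
  have h2 : Real.exp (-y) < 1 := by rw [Real.exp_lt_one_iff]; linarith
  rw [div_eq_div_iff (by linarith) (by linarith), one_mul, mul_sub, ← Real.exp_add, mul_one]
  simp

theorem stmt7 (r : ℝ) (hr : 0 < r) (a : ℕ) (ha : 1 ≤ a) :
    ∑' n : ℕ, Real.exp (-Real.pi * ((n : ℝ) + 1 / 2) * (2 * (a : ℝ) - 1) * Real.sqrt r)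
        / Real.sinh (((n : ℝ) + 1 / 2) * Real.pi * Real.sqrt r)
      = -(∑ n ∈ Finset.range (a - 1), 1 / Real.sinh (Real.pi * ((n : ℝ) + 1) * Real.sqrt r))
        + 2 * ∑' n : ℕ, 1 / (Real.exp (Real.pi * (2 * (n : ℝ) + 1) * Real.sqrt r) - 1) := by
  set t := Real.pi * Real.sqrt r with htdef
  have ht : 0 < t := mul_pos Real.pi_pos (Real.sqrt_pos.2 hr)
  set q := Real.exp (-t) with hqdef
  have hq0 : 0 < q := Real.exp_pos _
  have hq1 : q < 1 := by rw [hqdef, Real.exp_lt_one_iff]; linarith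
  have hpow : ∀ k : ℕ, q ^ k = Real.exp (-((k : ℝ) * t)) := by
    intro k
    rw [hqdef, ← Real.exp_nat_mul]
    ring_nf
  have htermL : ∀ n : ℕ,
      Real.exp (-Real.pi * ((n : ℝ) + 1 / 2) * (2 * (a : ℝ) - 1) * Real.sqrt r)
        / Real.sinh (((n : ℝ) + 1 / 2) * Real.pi * Real.sqrt r)
      = 2 * (q ^ ((2 * n + 1) * a) / (1 - q ^ (2 * n + 1))) := by
    intro n
    have hx : 0 < ((n : ℝ) + 1 / 2) * t := by positivity
    have e1 : -Real.pi * ((n : ℝ) + 1 / 2) * (2 * (a : ℝ) - 1) * Real.sqrt r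
        = -((2 * (a : ℝ) - 1) * (((n : ℝ) + 1 / 2) * t)) := by rw [htdef]; ring
    have e2 : ((n : ℝ) + 1 / 2) * Real.pi * Real.sqrt r = ((n : ℝ) + 1 / 2) * t := by
      rw [htdef]; ring
    rw [e1, e2, frac1 _ _ hx, hpow, hpow]
    congr 2
    · congr 1
      push_cast
      ring
    · congr 2
      push_cast
      ring
  have htermF : ∀ n : ℕ,
      1 / Real.sinh (Real.pi * ((n : ℝ) + 1) * Real.sqrt r)
      = 2 * (q ^ (n + 1) / (1 - q ^ (2 * (n + 1)))) := by
    intro n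
    have hx : 0 < ((n : ℝ) + 1) * t := by positivity
    have e2 : Real.pi * ((n : ℝ) + 1) * Real.sqrt r = ((n : ℝ) + 1) * t := by
      rw [htdef]; ring
    have h0 : (1 : ℝ) = Real.exp (-((0 : ℝ) * (((n : ℝ) + 1) * t))) := by simp
    rw [e2, show (1 : ℝ) / Real.sinh (((n : ℝ) + 1) * t)
        = Real.exp (-((0 : ℝ) * (((n : ℝ) + 1) * t))) / Real.sinh (((n : ℝ) + 1) * t) by
      rw [← h0], frac1 _ _ hx, hpow, hpow]
    congr 2
    · congr 1
      push_cast
      ring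
    · congr 2
      push_cast
      ring
  have htermR : ∀ n : ℕ,
      1 / (Real.exp (Real.pi * (2 * (n : ℝ) + 1) * Real.sqrt r) - 1)
      = q ^ (2 * n + 1) / (1 - q ^ (2 * n + 1)) := by
    intro n
    have hy : 0 < (2 * (n : ℝ) + 1) * t := by positivity
    have e2 : Real.pi * (2 * (n : ℝ) + 1) * Real.sqrt r = (2 * (n : ℝ) + 1) * t := by
      rw [htdef]; ring
    rw [e2, frac2 _ hy, hpow]
    congr 2
    · congr 1
      push_cast
      ring
    · congr 1
      push_cast
      ring
  rw [tsum_congr htermL, tsum_congr htermR, Finset.sum_congr rfl (fun n _ => htermF n),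
    tsum_mul_left]
  have hk := keyind q hq0 hq1 a ha
  rw [hk, ← Finset.mul_sum]
  ring
end

section
/- For |q| < 1, real x with |x| ≤ 1, and positive integers a, p with a < p: log((−x q^a; q^p)_∞ / (x q^a; q^p)_∞) = 2 ∑_{n=1}^∞ q^n ∑_{AB = n, A odd, B ≡ a (mod p)} x^A / A. -/
/-!
Taking logarithms turns the products into series, and
`log ((1 + y) / (1 - y)) = 2 ∑ₖ y ^ (2k+1) / (2k+1)` expands each factor. With
`y = x q ^ B`, where `B = a + p n` runs over the positive integers `≡ a (mod p)`, the resulting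
double series over `(n, k)` converges absolutely, so it may be regrouped by `N = A B` with
`A = 2k + 1` odd: this is the divisor sum on the right.
-/

open Finset Function

namespace Real

theorem log_tprod_one_add_div_tprod_one_sub {ι : Type*} {y : ι → ℝ} (hy : Summable y)
    (hy1 : ∀ i, |y i| < 1) :
    log ((∏' i, (1 + y i)) / ∏' i, (1 - y i)) = ∑' i, (log (1 + y i) - log (1 - y i)) := by
  have hadd : ∀ i, 0 < 1 + y i := fun i => by linarith [neg_abs_le (y i), hy1 i]
  have hsub : ∀ i, 0 < 1 - y i := fun i => by linarith [le_abs_self (y i), hy1 i]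
  have hlog_add := summable_log_one_add_of_summable hy
  have hlog_sub : Summable fun i => log (1 - y i) := by
    simpa [sub_eq_add_neg] using summable_log_one_add_of_summable hy.neg
  rw [← rexp_tsum_eq_tprod hadd hlog_add, ← rexp_tsum_eq_tprod hsub hlog_sub, ← exp_sub,
    log_exp, hlog_add.tsum_sub hlog_sub]

theorem hasSum_log_tprod_one_add_div_tprod_one_sub {ι : Type*} {y : ι → ℝ} {r : ℝ}
    (hy : Summable y) (hr₀ : 0 ≤ r) (hr : r < 1) (hyr : ∀ i, |y i| ≤ r) :
    HasSum (fun ik : ι × ℕ => 2 * (1 / (2 * ik.2 + 1)) * y ik.1 ^ (2 * ik.2 + 1))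
      (log ((∏' i, (1 + y i)) / ∏' i, (1 - y i))) := by
  have hy1 : ∀ i, |y i| < 1 := fun i => (hyr i).trans_lt hr
  have hsummable : Summable fun ik : ι × ℕ =>
      2 * (1 / (2 * ik.2 + 1)) * y ik.1 ^ (2 * ik.2 + 1) := by
    have hgeom := summable_geometric_of_lt_one (sq_nonneg r) (by nlinarith)
    refine Summable.of_norm_bounded
      ((hy.abs.mul_of_nonneg hgeom (fun _ => abs_nonneg _) (fun _ => by positivity)).mul_left 2)
      fun ⟨i, k⟩ => ?_
    have hk : 1 / (2 * (k : ℝ) + 1) ≤ 1 := by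
      rw [div_le_one (by positivity)]; linarith [k.cast_nonneg (α := ℝ)]
    have hpow : |y i| ^ (2 * k) ≤ (r ^ 2) ^ k := by
      rw [pow_mul]; gcongr
      exact hyr i
    calc ‖2 * (1 / (2 * (k : ℝ) + 1)) * y i ^ (2 * k + 1)‖
        = 2 * (1 / (2 * (k : ℝ) + 1)) * (|y i| * |y i| ^ (2 * k)) := by
          rw [Real.norm_eq_abs, abs_mul, abs_mul, abs_pow, pow_succ', abs_two,
            abs_of_pos (by positivity : (0 : ℝ) < 1 / (2 * k + 1))]
      _ ≤ 2 * 1 * (|y i| * (r ^ 2) ^ k) := by gcongr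
      _ = 2 * (|y i| * (r ^ 2) ^ k) := by rw [mul_one]
  rw [log_tprod_one_add_div_tprod_one_sub hy hy1,
    (hsummable.hasSum.prod_fiberwise fun i => hasSum_log_sub_log_of_abs_lt_one (hy1 i)).tsum_eq]
  exact hsummable.hasSum

end Real

theorem HasSum.sum_divisors_odd_cofactor_mod {α : Type*} [AddCommMonoid α] [TopologicalSpace α]
    [ContinuousAdd α] [RegularSpace α] {a p : ℕ} (ha : 0 < a) (hap : a < p) {φ : ℕ → ℕ → α} {s : α}
    (h : HasSum (fun nk : ℕ × ℕ => φ (2 * nk.2 + 1) (a + p * nk.1)) s) :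
    HasSum (fun n : ℕ => ∑ A ∈ (n + 1).divisors.filter (fun A => Odd A ∧ (n + 1) / A % p = a % p),
      φ A ((n + 1) / A)) s := by
  let D : ℕ → Finset ℕ := fun N => N.divisors.filter (fun A => Odd A ∧ N / A % p = a % p)
  let g : ℕ × ℕ → α := fun NA => if NA.2 ∈ D NA.1 then φ NA.2 (NA.1 / NA.2) else 0
  let Φ : ℕ × ℕ → ℕ × ℕ := fun nk => ((2 * nk.2 + 1) * (a + p * nk.1), 2 * nk.2 + 1)
  have hΦ : Injective Φ := by
    rintro ⟨n, k⟩ ⟨n', k'⟩ h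
    simp only [Φ, Prod.mk.injEq] at h
    obtain ⟨hN, hA⟩ := h
    have hk : k = k' := by omega
    subst hk
    have : p * n = p * n' := by
      have := Nat.eq_of_mul_eq_mul_left (by omega : 0 < 2 * k + 1) hN
      omega
    rw [Nat.eq_of_mul_eq_mul_left (by omega) this]
  have hgΦ : g ∘ Φ = fun nk => φ (2 * nk.2 + 1) (a + p * nk.1) := by
    funext ⟨n, k⟩
    have hcancel : (2 * k + 1) * (a + p * n) / (2 * k + 1) = a + p * n :=
      Nat.mul_div_cancel_left _ (by omega)
    have hmem : 2 * k + 1 ∈ D ((2 * k + 1) * (a + p * n)) := by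
      simp only [D, mem_filter, Nat.mem_divisors, hcancel, Nat.add_mul_mod_self_left]
      exact ⟨⟨dvd_mul_right _ _, by positivity⟩, odd_two_mul_add_one k, trivial⟩
    simp only [g, Φ, comp_apply, if_pos hmem, hcancel]
  have hrange : ∀ NA ∉ Set.range Φ, g NA = 0 := by
    rintro ⟨N, A⟩ hNA
    refine if_neg fun hmem => hNA ?_
    simp only [D, mem_filter, Nat.mem_divisors] at hmem
    obtain ⟨⟨hdvd, -⟩, ⟨k, rfl⟩, hmod⟩ := hmem
    have hB : a + p * (N / (2 * k + 1) / p) = N / (2 * k + 1) := by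
      have := Nat.div_add_mod (N / (2 * k + 1)) p
      rw [hmod, Nat.mod_eq_of_lt hap] at this
      omega
    exact ⟨(N / (2 * k + 1) / p, k), by simp only [Φ, hB, Nat.mul_div_cancel' hdvd]⟩
  have hg : HasSum (fun N => ∑ A ∈ D N, φ A (N / A)) s := by
    refine ((hΦ.hasSum_iff hrange).mp (hgΦ ▸ h)).prod_fiberwise fun N => ?_
    rw [← sum_congr rfl fun A hA => if_pos hA]
    exact hasSum_sum_of_ne_finset_zero fun A hA => if_neg hA
  have hzero : ∀ N ∉ Set.range Nat.succ, ∑ A ∈ D N, φ A (N / A) = 0 := by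
    rintro (_ | N) hN
    · simp only [D, Nat.divisors_zero, filter_empty, sum_empty]
    · exact absurd ⟨N, rfl⟩ hN
  exact (Nat.succ_injective.hasSum_iff hzero).mpr hg

theorem stmt9 (q x : ℝ) (hq : 0 < q) (hq1 : q < 1) (hx : |x| ≤ 1)
    (a p : ℕ) (ha : 1 ≤ a) (hap : a < p) :
    Real.log ((∏' n : ℕ, (1 + x * q ^ (a + p * n))) / ∏' n : ℕ, (1 - x * q ^ (a + p * n)))
      = 2 * ∑' n : ℕ, q ^ (n + 1) *
          ∑ A ∈ (n + 1).divisors.filter (fun A => Odd A ∧ ((n + 1) / A) % p = a % p),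
            x ^ A / (A : ℝ) := by
  have hqa : q ^ a < 1 := pow_lt_one₀ hq.le hq1 (by omega)
  have hbound : ∀ n : ℕ, |x * q ^ (a + p * n)| ≤ q ^ a * (q ^ p) ^ n := by
    intro n
    rw [abs_mul, abs_of_pos (pow_pos hq _), pow_add, pow_mul]
    exact mul_le_of_le_one_left (by positivity) hx
  have hsummable : Summable fun n : ℕ => x * q ^ (a + p * n) :=
    .of_norm_bounded ((summable_geometric_of_lt_one (by positivity)
      (pow_lt_one₀ hq.le hq1 (by omega))).mul_left _) hbound
  have hyr : ∀ n : ℕ, |x * q ^ (a + p * n)| ≤ q ^ a := fun n =>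
    (hbound n).trans (mul_le_of_le_one_right (by positivity) (pow_le_one₀ (by positivity)
      (pow_le_one₀ hq.le hq1.le)))
  have hlog := Real.hasSum_log_tprod_one_add_div_tprod_one_sub hsummable (pow_nonneg hq.le a)
    hqa hyr
  have hfac := HasSum.sum_divisors_odd_cofactor_mod
    (φ := fun A B => 2 * (1 / (A : ℝ)) * (x * q ^ B) ^ A) ha hap (by simpa using hlog)
  rw [← hfac.tsum_eq, ← tsum_mul_left]
  refine tsum_congr fun n => ?_
  rw [mul_sum, mul_sum]
  refine sum_congr rfl fun A hA => ?_
  obtain ⟨hdvd, -⟩ := Nat.mem_divisors.mp (mem_filter.mp hA).1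
  rw [mul_pow, ← pow_mul, Nat.div_mul_cancel hdvd]
  ring
end

section
/- For 0 < q < 1: G(q²) · θ₃(5/2, 3/2; q) = θ₄(5/2, 3/2; q) · G(q)², where G is the Rogers–Ramanujan product G(q) = ∏_{n≥0} 1/((1−q^{5n+1})(1−q^{5n+4})), θ₃(α,β;q) = ∑_{n∈ℤ} q^{αn²+βn}, θ₄(α,β;q) = ∑_{n∈ℤ} (−1)^n q^{αn²+βn}. -/
open Real Filter Finset

noncomputable section JTP

/-- finite q-Pochhammer `(p;p)_n` -/
def Qp (p : ℝ) (n : ℕ) : ℝ := ∏ k ∈ Finset.range n, (1 - p ^ (k + 1))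

lemma Qp_succ (p : ℝ) (n : ℕ) : Qp p (n + 1) = Qp p n * (1 - p ^ (n + 1)) := by
  simp [Qp, Finset.prod_range_succ]

lemma Qp_pos {p : ℝ} (hp : 0 < p) (hp1 : p < 1) (n : ℕ) : 0 < Qp p n := by
  apply Finset.prod_pos
  intro k _
  have : p ^ (k + 1) < 1 := pow_lt_one₀ hp.le hp1 (by omega)
  linarith

/-- `|log(1+y)| ≤ |y|/(1-c)` for `|y| ≤ c < 1`. -/
lemma abs_log_one_add_le {y c : ℝ} (hc : c < 1) (h : |y| ≤ c) :
    |Real.log (1 + y)| ≤ |y| / (1 - c) := by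
  have hc0 : 0 ≤ c := le_trans (abs_nonneg y) h
  have hy1 : -c ≤ y := (abs_le.mp h).1
  have hy2 : y ≤ c := (abs_le.mp h).2
  have hpos : 0 < 1 + y := by linarith
  have h1c : 0 < 1 - c := by linarith
  rcases le_or_gt 0 y with hy | hy
  · have h1 : Real.log (1 + y) ≤ y := by
      have := Real.log_le_sub_one_of_pos hpos
      linarith
    have h2 : 0 ≤ Real.log (1 + y) := Real.log_nonneg (by linarith)
    rw [abs_of_nonneg h2, abs_of_nonneg hy]
    calc Real.log (1+y) ≤ y := h1
      _ ≤ y / (1 - c) := by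
        rw [le_div_iff₀ h1c]; nlinarith
  · have h2 : Real.log (1 + y) ≤ 0 := Real.log_nonpos (by linarith) (by linarith)
    rw [abs_of_nonpos h2, abs_of_neg hy]
    have h3 : Real.log ((1+y)⁻¹) ≤ (1+y)⁻¹ - 1 := Real.log_le_sub_one_of_pos (by positivity)
    rw [Real.log_inv] at h3
    have h4 : (1+y)⁻¹ - 1 = -y / (1+y) := by field_simp; ring
    rw [h4] at h3
    have h5 : -y / (1 + y) ≤ -y / (1 - c) := by
      apply div_le_div_of_nonneg_left (by linarith) h1c (by linarith)
    linarith

/-- summability of logs of `1 + t * p^n` type factors. -/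
lemma summable_log_one_add {p t : ℝ} (hp : 0 < p) (hp1 : p < 1) (ht : |t| < 1) :
    Summable fun n : ℕ => Real.log (1 + t * p ^ n) := by
  rw [← summable_abs_iff]
  have h1c : 0 < 1 - |t| := by linarith
  have hsum : Summable fun n : ℕ => (|t| * p ^ n) / (1 - |t|) :=
    Summable.div_const ((summable_geometric_of_lt_one hp.le hp1).mul_left _) _
  refine Summable.of_nonneg_of_le (fun n => abs_nonneg _) (fun n => ?_) hsum
  have hb : |t * p ^ n| ≤ |t| := by
    rw [abs_mul, abs_of_pos (pow_pos hp n)]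
    calc |t| * p ^ n ≤ |t| * 1 := by
          apply mul_le_mul_of_nonneg_left (pow_le_one₀ hp.le hp1.le) (abs_nonneg t)
      _ = |t| := mul_one _
  calc |Real.log (1 + t * p ^ n)| ≤ |t * p ^ n| / (1 - |t|) := abs_log_one_add_le ht hb
    _ = |t| * p ^ n / (1 - |t|) := by rw [abs_mul, abs_of_pos (pow_pos hp n)]

lemma one_add_mul_pow_pos {p t : ℝ} (hp : 0 < p) (hp1 : p < 1) (ht : |t| < 1) (n : ℕ) :
    0 < 1 + t * p ^ n := by
  have hb : |t * p ^ n| < 1 := by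
    rw [abs_mul, abs_of_pos (pow_pos hp n)]
    calc |t| * p ^ n ≤ |t| * 1 :=
          mul_le_mul_of_nonneg_left (pow_le_one₀ hp.le hp1.le) (abs_nonneg t)
      _ < 1 := by simpa using ht
  have := (abs_lt.mp hb).1
  linarith

end JTP
-- continuation
namespace JTPx
open Real Filter Finset

/-- log-sum of the product `∏ (1 + t pⁿ)` -/
noncomputable def LA (p t : ℝ) : ℝ := ∑' n : ℕ, Real.log (1 + t * p ^ n)

/-- the infinite product `∏ (1 + t pⁿ)` -/
noncomputable def A (p t : ℝ) : ℝ := ∏' n : ℕ, (1 + t * p ^ n)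

lemma A_eq_exp {p t : ℝ} (hp : 0 < p) (hp1 : p < 1) (ht : |t| < 1) :
    A p t = Real.exp (LA p t) := by
  have h2 := Real.rexp_tsum_eq_tprod (f := fun n : ℕ => 1 + t * p ^ n)
    (fun n => one_add_mul_pow_pos hp hp1 ht n)
    (summable_log_one_add hp hp1 ht)
  rw [A, LA]
  exact h2.symm

lemma A_pos {p t : ℝ} (hp : 0 < p) (hp1 : p < 1) (ht : |t| < 1) : 0 < A p t := by
  rw [A_eq_exp hp hp1 ht]; exact Real.exp_pos _

lemma A_multipliable {p t : ℝ} (hp : 0 < p) (hp1 : p < 1) (ht : |t| < 1) :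
    Multipliable fun n : ℕ => 1 + t * p ^ n := by
  exact Real.multipliable_of_summable_log (f := fun n : ℕ => 1 + t * p ^ n)
    (fun n => one_add_mul_pow_pos hp hp1 ht n)
    (summable_log_one_add hp hp1 ht)

lemma A_tendsto {p t : ℝ} (hp : 0 < p) (hp1 : p < 1) (ht : |t| < 1) :
    Tendsto (fun N => ∏ k ∈ Finset.range N, (1 + t * p ^ k)) atTop (nhds (A p t)) :=
  (A_multipliable hp hp1 ht).hasProd.tendsto_prod_nat

/-- `Qp p n` as partial product of `A p (-p)`. -/
lemma Qp_eq_partial (p : ℝ) (n : ℕ) :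
    Qp p n = ∏ k ∈ Finset.range n, (1 + (-p) * p ^ k) := by
  unfold Qp
  apply Finset.prod_congr rfl
  intro k _
  ring

lemma Qp_tendsto {p : ℝ} (hp : 0 < p) (hp1 : p < 1) :
    Tendsto (fun n => Qp p n) atTop (nhds (A p (-p))) := by
  have h := A_tendsto hp hp1 (t := -p) (by rwa [abs_neg, abs_of_pos hp])
  convert h using 2 with n
  exact Qp_eq_partial p n

/-- lower bound for `Qp`. -/
lemma Qp_ge {p : ℝ} (hp : 0 < p) (hp1 : p < 1) (n : ℕ) : A p (-p) ≤ Qp p n := by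
  have hd : ∀ m, Qp p (m + 1) ≤ Qp p m := by
    intro m
    rw [Qp_succ]
    have h1 : p ^ (m + 1) ≤ 1 := pow_le_one₀ hp.le hp1.le
    nlinarith [Qp_pos hp hp1 m, pow_pos hp (m + 1)]
  have hanti : Antitone fun n => Qp p n := antitone_nat_of_succ_le hd
  exact hanti.le_of_tendsto (Qp_tendsto hp hp1) n

lemma inv_Qp_le {p : ℝ} (hp : 0 < p) (hp1 : p < 1) (n : ℕ) :
    (Qp p n)⁻¹ ≤ (A p (-p))⁻¹ := by
  have hA : 0 < A p (-p) := A_pos hp hp1 (by rwa [abs_neg, abs_of_pos hp])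
  exact inv_anti₀ hA (Qp_ge hp hp1 n)

end JTPx
namespace JTPx
open Real Filter Finset

/-- the Euler series `∑ p^(C(n,2)) tⁿ / (p;p)ₙ`. -/
noncomputable def T (p t : ℝ) : ℝ := ∑' n : ℕ, p ^ n.choose 2 * t ^ n / Qp p n

/-- the Euler series `∑ tⁿ / (p;p)ₙ`. -/
noncomputable def S (p t : ℝ) : ℝ := ∑' n : ℕ, t ^ n / Qp p n

lemma choose_two_succ (n : ℕ) : (n + 1).choose 2 = n.choose 2 + n := by
  have := Nat.choose_succ_succ n 1
  simpa [Nat.choose_one_right, Nat.add_comm] using this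

lemma summable_pow_choose_mul {p t : ℝ} (hp : 0 < p) (hp1 : p < 1) :
    Summable fun n : ℕ => p ^ n.choose 2 * |t| ^ n := by
  apply summable_of_ratio_norm_eventually_le (r := 1/2) (by norm_num)
  have hev : ∀ᶠ n : ℕ in atTop, p ^ n * |t| ≤ 1/2 := by
    have h0 : Tendsto (fun n : ℕ => p ^ n * |t|) atTop (nhds 0) := by
      simpa using (tendsto_pow_atTop_nhds_zero_of_lt_one hp.le hp1).mul_const |t|
    have := h0.eventually_le_const (show (0:ℝ) < 1/2 by norm_num)
    exact this
  filter_upwards [hev] with n hn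
  have hterm : p ^ (n+1).choose 2 * |t| ^ (n+1) = (p ^ n * |t|) * (p ^ n.choose 2 * |t| ^ n) := by
    rw [choose_two_succ, pow_add, pow_succ]
    ring
  rw [Real.norm_eq_abs, Real.norm_eq_abs, hterm]
  have h1 : 0 ≤ p ^ n.choose 2 * |t| ^ n := by positivity
  rw [abs_of_nonneg (by positivity), abs_of_nonneg h1]
  apply mul_le_mul_of_nonneg_right hn h1

lemma T_term_bound {p t : ℝ} (hp : 0 < p) (hp1 : p < 1) (n : ℕ) :
    |p ^ n.choose 2 * t ^ n / Qp p n| ≤ (p ^ n.choose 2 * |t| ^ n) * (A p (-p))⁻¹ := by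
  have hQ := Qp_pos hp hp1 n
  rw [abs_div, abs_of_pos hQ, abs_mul, abs_pow, abs_of_pos hp, abs_pow, div_eq_mul_inv]
  exact mul_le_mul_of_nonneg_left (inv_Qp_le hp hp1 n) (by positivity)

lemma T_summable {p t : ℝ} (hp : 0 < p) (hp1 : p < 1) :
    Summable fun n : ℕ => p ^ n.choose 2 * t ^ n / Qp p n := by
  rw [← summable_abs_iff]
  exact Summable.of_nonneg_of_le (fun n => abs_nonneg _) (fun n => T_term_bound hp hp1 n)
    ((summable_pow_choose_mul hp hp1).mul_right _)

lemma S_summable {p t : ℝ} (hp : 0 < p) (hp1 : p < 1) (ht : |t| < 1) :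
    Summable fun n : ℕ => t ^ n / Qp p n := by
  rw [← summable_abs_iff]
  refine Summable.of_nonneg_of_le (fun n => abs_nonneg _) (fun n => ?_)
    (((summable_geometric_of_lt_one (abs_nonneg t) ht)).mul_right ((A p (-p))⁻¹))
  have hQ := Qp_pos hp hp1 n
  rw [abs_div, abs_of_pos hQ, abs_pow, div_eq_mul_inv]
  exact mul_le_mul_of_nonneg_left (inv_Qp_le hp hp1 n) (by positivity)

/-- functional equation for `T`. -/
lemma T_eq {p : ℝ} (hp : 0 < p) (hp1 : p < 1) (t : ℝ) :
    T p t = (1 + t) * T p (t * p) := by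
  have hs1 : Summable fun n : ℕ => p ^ n.choose 2 * t ^ n / Qp p n := T_summable hp hp1
  have hs2 : Summable fun n : ℕ => p ^ n.choose 2 * (t * p) ^ n / Qp p n := T_summable hp hp1
  have key : T p t - T p (t * p) = t * T p (t * p) := by
    have hdiff : (fun n : ℕ => p ^ n.choose 2 * t ^ n / Qp p n
        - p ^ n.choose 2 * (t * p) ^ n / Qp p n)
        = fun n : ℕ => p ^ n.choose 2 * t ^ n * (1 - p ^ n) / Qp p n := by
      funext n
      rw [mul_pow, ← sub_div]
      congr 1
      ring
    have hsd : Summable (fun n : ℕ => p ^ n.choose 2 * t ^ n * (1 - p ^ n) / Qp p n) := by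
      rw [← hdiff]; exact hs1.sub hs2
    have h1 : T p t - T p (t * p)
        = ∑' n : ℕ, p ^ n.choose 2 * t ^ n * (1 - p ^ n) / Qp p n := by
      rw [T, T, ← Summable.tsum_sub hs1 hs2]
      exact tsum_congr fun n => congrFun hdiff n
    rw [h1, Summable.tsum_eq_zero_add hsd]
    have h0 : p ^ (0:ℕ).choose 2 * t ^ 0 * (1 - p ^ 0) / Qp p 0 = 0 := by simp
    rw [h0, zero_add]
    have h2 : ∀ n : ℕ, p ^ (n+1).choose 2 * t ^ (n+1) * (1 - p ^ (n+1)) / Qp p (n+1)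
        = t * (p ^ n.choose 2 * (t * p) ^ n / Qp p n) := by
      intro n
      have hQ := Qp_pos hp hp1 n
      have hQ1 := Qp_pos hp hp1 (n + 1)
      have hne : (1 : ℝ) - p ^ (n+1) ≠ 0 := by
        have := Qp_succ p n
        intro h; rw [h, mul_zero] at this; rw [this] at hQ1; exact lt_irrefl 0 hQ1
      rw [Qp_succ, choose_two_succ, pow_add, mul_pow]
      field_simp
      ring
    rw [tsum_congr h2, tsum_mul_left]
    rfl
  linarith [key]

/-- functional equation for `S`. -/
lemma S_eq {p : ℝ} (hp : 0 < p) (hp1 : p < 1) {t : ℝ} (ht : |t| < 1) :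
    S p (t * p) = (1 - t) * S p t := by
  have htp : |t * p| < 1 := by
    rw [abs_mul, abs_of_pos hp]
    calc |t| * p ≤ |t| * 1 := mul_le_mul_of_nonneg_left hp1.le (abs_nonneg t)
      _ < 1 := by simpa using ht
  have hs1 : Summable fun n : ℕ => t ^ n / Qp p n := S_summable hp hp1 ht
  have hs2 : Summable fun n : ℕ => (t * p) ^ n / Qp p n := S_summable hp hp1 htp
  have key : S p t - S p (t * p) = t * S p t := by
    have hdiff : (fun n : ℕ => t ^ n / Qp p n - (t * p) ^ n / Qp p n)
        = fun n : ℕ => t ^ n * (1 - p ^ n) / Qp p n := by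
      funext n
      rw [mul_pow, ← sub_div]
      congr 1
      ring
    have hsd : Summable (fun n : ℕ => t ^ n * (1 - p ^ n) / Qp p n) := by
      rw [← hdiff]; exact hs1.sub hs2
    have h1 : S p t - S p (t * p) = ∑' n : ℕ, t ^ n * (1 - p ^ n) / Qp p n := by
      rw [S, S, ← Summable.tsum_sub hs1 hs2]
      exact tsum_congr fun n => congrFun hdiff n
    rw [h1, Summable.tsum_eq_zero_add hsd]
    have h0 : t ^ 0 * (1 - p ^ 0) / Qp p 0 = 0 := by simp
    rw [h0, zero_add]
    have h2 : ∀ n : ℕ, t ^ (n+1) * (1 - p ^ (n+1)) / Qp p (n+1)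
        = t * (t ^ n / Qp p n) := by
      intro n
      have hQ := Qp_pos hp hp1 n
      have hQ1 := Qp_pos hp hp1 (n + 1)
      have hne : (1 : ℝ) - p ^ (n+1) ≠ 0 := by
        have := Qp_succ p n
        intro h; rw [h, mul_zero] at this; rw [this] at hQ1; exact lt_irrefl 0 hQ1
      rw [Qp_succ]
      field_simp
      ring
    rw [tsum_congr h2, tsum_mul_left]
    rfl
  linarith [key]

end JTPx
namespace JTPx
open Real Filter Finset

lemma T_iter {p : ℝ} (hp : 0 < p) (hp1 : p < 1) (t : ℝ) (N : ℕ) :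
    T p t = (∏ k ∈ Finset.range N, (1 + t * p ^ k)) * T p (t * p ^ N) := by
  induction N with
  | zero => simp
  | succ n ih =>
    rw [ih, Finset.prod_range_succ, T_eq hp hp1 (t * p ^ n)]
    rw [mul_assoc, pow_succ]
    ring

lemma S_iter {p : ℝ} (hp : 0 < p) (hp1 : p < 1) {t : ℝ} (ht : |t| < 1) (N : ℕ) :
    S p (t * p ^ N) = (∏ k ∈ Finset.range N, (1 - t * p ^ k)) * S p t := by
  induction N with
  | zero => simp
  | succ n ih =>
    have htn : |t * p ^ n| < 1 := by
      rw [abs_mul, abs_of_pos (pow_pos hp n)]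
      calc |t| * p ^ n ≤ |t| * 1 :=
            mul_le_mul_of_nonneg_left (pow_le_one₀ hp.le hp1.le) (abs_nonneg t)
        _ < 1 := by simpa using ht
    have : t * p ^ (n + 1) = (t * p ^ n) * p := by ring
    rw [this, S_eq hp hp1 htn, ih, Finset.prod_range_succ]
    ring

lemma T_sub_one_bound {p : ℝ} (hp : 0 < p) (hp1 : p < 1) {s : ℝ} (hs : |s| ≤ 1) :
    |T p s - 1| ≤ |s| * ∑' n : ℕ, p ^ (n+1).choose 2 * (A p (-p))⁻¹ := by
  have hsum : Summable fun n : ℕ => p ^ n.choose 2 * s ^ n / Qp p n := T_summable hp hp1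
  have hsum1 : Summable fun n : ℕ => p ^ (n+1).choose 2 * s ^ (n+1) / Qp p (n+1) :=
    hsum.comp_injective (add_left_injective 1)
  have h0 : T p s = 1 + ∑' n : ℕ, p ^ (n+1).choose 2 * s ^ (n+1) / Qp p (n+1) := by
    rw [T, Summable.tsum_eq_zero_add hsum]
    simp [Qp]
  rw [h0]
  have hK : Summable fun n : ℕ => p ^ (n+1).choose 2 * (A p (-p))⁻¹ := by
    have := (summable_pow_choose_mul (t := (1:ℝ)) hp hp1).mul_right ((A p (-p))⁻¹)
    simp only [abs_one, one_pow, mul_one] at this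
    exact this.comp_injective (add_left_injective 1)
  have habs : |∑' n : ℕ, p ^ (n+1).choose 2 * s ^ (n+1) / Qp p (n+1)|
      ≤ ∑' n : ℕ, |s| * (p ^ (n+1).choose 2 * (A p (-p))⁻¹) := by
    have hn1 := norm_tsum_le_tsum_norm (f := fun n : ℕ => p ^ (n+1).choose 2 * s ^ (n+1) / Qp p (n+1))
      (by simpa only [Real.norm_eq_abs] using hsum1.abs)
    simp only [Real.norm_eq_abs] at hn1
    apply hn1.trans
    apply Summable.tsum_le_tsum _ (hsum1.abs) (hK.mul_left |s|)
    intro n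
    have h1 := T_term_bound hp hp1 (t := s) (n + 1)
    have h2 : p ^ (n+1).choose 2 * |s| ^ (n+1) * (A p (-p))⁻¹
        ≤ |s| * (p ^ (n+1).choose 2 * (A p (-p))⁻¹) := by
      have hpow : |s| ^ (n+1) ≤ |s| := by
        calc |s| ^ (n + 1) = |s| * |s| ^ n := by ring
          _ ≤ |s| * 1 := by
            apply mul_le_mul_of_nonneg_left (pow_le_one₀ (abs_nonneg s) hs) (abs_nonneg s)
          _ = |s| := mul_one _
      have hA : 0 ≤ (A p (-p))⁻¹ := by
        have := A_pos hp hp1 (t := -p) (by rwa [abs_neg, abs_of_pos hp])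
        positivity
      calc p ^ (n+1).choose 2 * |s| ^ (n+1) * (A p (-p))⁻¹
          ≤ p ^ (n+1).choose 2 * |s| * (A p (-p))⁻¹ := by
            apply mul_le_mul_of_nonneg_right _ hA
            exact mul_le_mul_of_nonneg_left hpow (by positivity)
        _ = |s| * (p ^ (n+1).choose 2 * (A p (-p))⁻¹) := by ring
    exact h1.trans h2
  rw [tsum_mul_left] at habs
  calc |1 + ∑' n : ℕ, p ^ (n+1).choose 2 * s ^ (n+1) / Qp p (n+1) - 1|
      = |∑' n : ℕ, p ^ (n+1).choose 2 * s ^ (n+1) / Qp p (n+1)| := by congr 1; ring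
    _ ≤ |s| * ∑' n : ℕ, p ^ (n+1).choose 2 * (A p (-p))⁻¹ := habs

lemma T_tendsto_one {p : ℝ} (hp : 0 < p) (hp1 : p < 1) {t : ℝ} (ht : |t| ≤ 1) :
    Tendsto (fun N : ℕ => T p (t * p ^ N)) atTop (nhds 1) := by
  set K := ∑' n : ℕ, p ^ (n+1).choose 2 * (A p (-p))⁻¹ with hKdef
  have h : Tendsto (fun N : ℕ => T p (t * p ^ N) - 1) atTop (nhds 0) := by
    apply squeeze_zero_norm (a := fun N => (|t| * K) * p ^ N)
    · intro N
      have hsN : |t * p ^ N| ≤ 1 := by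
        rw [abs_mul, abs_of_pos (pow_pos hp N)]
        calc |t| * p ^ N ≤ 1 * 1 := by
              apply mul_le_mul ht (pow_le_one₀ hp.le hp1.le) (by positivity) (by norm_num)
          _ = 1 := by norm_num
      have := T_sub_one_bound hp hp1 hsN
      rw [Real.norm_eq_abs]
      calc |T p (t * p ^ N) - 1| ≤ |t * p ^ N| * K := this
        _ = |t| * K * p ^ N := by
          rw [abs_mul, abs_of_pos (pow_pos hp N)]; ring
    · simpa using (tendsto_pow_atTop_nhds_zero_of_lt_one hp.le hp1).const_mul (|t| * K)
  have := h.add_const 1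
  simpa using this

lemma S_sub_one_bound {p : ℝ} (hp : 0 < p) (hp1 : p < 1) {s c : ℝ} (hc : c < 1)
    (hs : |s| ≤ c) :
    |S p s - 1| ≤ |s| * ∑' n : ℕ, c ^ n * (A p (-p))⁻¹ := by
  have hc0 : 0 ≤ c := (abs_nonneg s).trans hs
  have hs1 : |s| < 1 := lt_of_le_of_lt hs hc
  have hsum : Summable fun n : ℕ => s ^ n / Qp p n := S_summable hp hp1 hs1
  have hsum1 : Summable fun n : ℕ => s ^ (n+1) / Qp p (n+1) :=
    hsum.comp_injective (add_left_injective 1)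
  have h0 : S p s = 1 + ∑' n : ℕ, s ^ (n+1) / Qp p (n+1) := by
    rw [S, Summable.tsum_eq_zero_add hsum]
    simp [Qp]
  rw [h0]
  have hA : 0 < (A p (-p))⁻¹ := by
    have := A_pos hp hp1 (t := -p) (by rwa [abs_neg, abs_of_pos hp])
    positivity
  have hK : Summable fun n : ℕ => c ^ n * (A p (-p))⁻¹ :=
    (summable_geometric_of_lt_one hc0 hc).mul_right _
  have habs : |∑' n : ℕ, s ^ (n+1) / Qp p (n+1)|
      ≤ ∑' n : ℕ, |s| * (c ^ n * (A p (-p))⁻¹) := by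
    have hn1 := norm_tsum_le_tsum_norm (f := fun n : ℕ => s ^ (n+1) / Qp p (n+1))
      (by simpa only [Real.norm_eq_abs] using hsum1.abs)
    simp only [Real.norm_eq_abs] at hn1
    apply hn1.trans
    apply Summable.tsum_le_tsum _ (hsum1.abs) (hK.mul_left |s|)
    intro n
    have hQ := Qp_pos hp hp1 (n + 1)
    rw [abs_div, abs_of_pos hQ, abs_pow, div_eq_mul_inv]
    calc |s| ^ (n+1) * (Qp p (n+1))⁻¹ ≤ |s| ^ (n + 1) * (A p (-p))⁻¹ :=
          mul_le_mul_of_nonneg_left (inv_Qp_le hp hp1 (n+1)) (by positivity)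
      _ ≤ (|s| * c ^ n) * (A p (-p))⁻¹ := by
          apply mul_le_mul_of_nonneg_right _ hA.le
          calc |s| ^ (n + 1) = |s| * |s| ^ n := by ring
            _ ≤ |s| * c ^ n := by
              apply mul_le_mul_of_nonneg_left (pow_le_pow_left₀ (abs_nonneg s) hs n)
                (abs_nonneg s)
      _ = |s| * (c ^ n * (A p (-p))⁻¹) := by ring
  rw [tsum_mul_left] at habs
  calc |1 + ∑' n : ℕ, s ^ (n+1) / Qp p (n+1) - 1|
      = |∑' n : ℕ, s ^ (n+1) / Qp p (n+1)| := by congr 1; ring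
    _ ≤ |s| * ∑' n : ℕ, c ^ n * (A p (-p))⁻¹ := habs

lemma S_tendsto_one {p : ℝ} (hp : 0 < p) (hp1 : p < 1) {t : ℝ} (ht : |t| < 1) :
    Tendsto (fun N : ℕ => S p (t * p ^ N)) atTop (nhds 1) := by
  set K := ∑' n : ℕ, |t| ^ n * (A p (-p))⁻¹ with hKdef
  have h : Tendsto (fun N : ℕ => S p (t * p ^ N) - 1) atTop (nhds 0) := by
    apply squeeze_zero_norm (a := fun N => (|t| * K) * p ^ N)
    · intro N
      have hsN : |t * p ^ N| ≤ |t| := by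
        rw [abs_mul, abs_of_pos (pow_pos hp N)]
        calc |t| * p ^ N ≤ |t| * 1 :=
              mul_le_mul_of_nonneg_left (pow_le_one₀ hp.le hp1.le) (abs_nonneg t)
          _ = |t| := mul_one _
      have := S_sub_one_bound hp hp1 ht hsN
      rw [Real.norm_eq_abs]
      calc |S p (t * p ^ N) - 1| ≤ |t * p ^ N| * K := this
        _ = |t| * K * p ^ N := by
          rw [abs_mul, abs_of_pos (pow_pos hp N)]; ring
    · simpa using (tendsto_pow_atTop_nhds_zero_of_lt_one hp.le hp1).const_mul (|t| * K)
  have := h.add_const 1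
  simpa using this

/-- Euler's identity I : `∏ (1+tpⁿ) = ∑ p^C(n,2) tⁿ/(p;p)ₙ`. -/
lemma euler1 {p t : ℝ} (hp : 0 < p) (hp1 : p < 1) (ht : |t| < 1) : A p t = T p t := by
  have h1 : Tendsto (fun N : ℕ => (∏ k ∈ Finset.range N, (1 + t * p ^ k)) * T p (t * p ^ N))
      atTop (nhds (A p t * 1)) :=
    (A_tendsto hp hp1 ht).mul (T_tendsto_one hp hp1 ht.le)
  have h2 : Tendsto (fun _ : ℕ => T p t) atTop (nhds (T p t)) := tendsto_const_nhds
  have h3 : (fun N : ℕ => (∏ k ∈ Finset.range N, (1 + t * p ^ k)) * T p (t * p ^ N))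
      = fun _ : ℕ => T p t := by
    funext N; exact (T_iter hp hp1 t N).symm
  rw [h3] at h1
  have := tendsto_nhds_unique h2 h1
  rw [this, mul_one]

/-- Euler's identity II : `(∑ tⁿ/(p;p)ₙ) ⬝ ∏(1 - tpⁿ) = 1`. -/
lemma euler2 {p t : ℝ} (hp : 0 < p) (hp1 : p < 1) (ht : |t| < 1) :
    A p (-t) * S p t = 1 := by
  have hmt : |(-t)| < 1 := by rwa [abs_neg]
  have h1 : Tendsto (fun N : ℕ => (∏ k ∈ Finset.range N, (1 - t * p ^ k)) * S p t)
      atTop (nhds (A p (-t) * S p t)) := by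
    apply Tendsto.mul_const
    have := A_tendsto hp hp1 hmt
    convert this using 2 with N
    apply Finset.prod_congr rfl
    intro k _
    ring
  have h2 : (fun N : ℕ => (∏ k ∈ Finset.range N, (1 - t * p ^ k)) * S p t)
      = fun N : ℕ => S p (t * p ^ N) := by
    funext N; exact (S_iter hp hp1 ht N).symm
  rw [h2] at h1
  exact tendsto_nhds_unique h1 (S_tendsto_one hp hp1 ht)

/-- vanishing of `T` at `t = -p^(-k)`. -/
lemma T_zero {p : ℝ} (hp : 0 < p) (hp1 : p < 1) (k : ℕ) :
    T p (-(p ^ (-(k:ℤ)))) = 0 := by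
  induction k with
  | zero =>
    have := T_eq hp hp1 (-1)
    simpa using this
  | succ n ih =>
    have hp0 : p ≠ 0 := hp.ne'
    have hstep := T_eq hp hp1 (-(p ^ (-(n+1:ℕ):ℤ)))
    have harg : -(p ^ (-(n+1:ℕ):ℤ)) * p = -(p ^ (-(n:ℕ):ℤ)) := by
      have h2 : p ^ (-(n+1:ℕ):ℤ) * p = p ^ ((-(n+1:ℕ):ℤ) + 1) := by
        rw [zpow_add_one₀ hp0]
      rw [neg_mul, h2]
      congr 1
      push_cast
      ring
    rw [harg, ih, mul_zero] at hstep
    exact hstep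

end JTPx
namespace JTPx
open Real Filter Finset

lemma abs_zpow' (a : ℝ) (n : ℤ) : |a ^ n| = |a| ^ n := by
  rcases n with m | m
  · rw [Int.ofNat_eq_coe, zpow_natCast, zpow_natCast, abs_pow]
  · rw [zpow_negSucc, zpow_negSucc, abs_inv, abs_pow]

/-- `e n = n(n-1)/2`. -/
def e (n : ℤ) : ℤ := n * (n - 1) / 2

lemma two_dvd_mul_pred (n : ℤ) : 2 ∣ n * (n - 1) := by
  rcases Int.even_or_odd n with h | h
  · exact Dvd.dvd.mul_right h.two_dvd _
  · obtain ⟨k, hk⟩ := h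
    exact Dvd.dvd.mul_left ⟨k, by omega⟩ _

lemma two_e (n : ℤ) : 2 * e n = n * (n - 1) :=
  Int.mul_ediv_cancel' (two_dvd_mul_pred n)

lemma e_succ (n : ℤ) : e (n + 1) = e n + n := by
  apply mul_left_cancel₀ (show (2:ℤ) ≠ 0 by norm_num)
  have h1 := two_e (n + 1)
  have h2 := two_e n
  nlinarith [h1, h2]

lemma e_nat (n : ℕ) : e (n : ℤ) = (n.choose 2 : ℤ) := by
  induction n with
  | zero => rfl
  | succ m ih =>
    have h1 : ((m : ℤ) + 1) = ((m + 1 : ℕ) : ℤ) := by push_cast; ring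
    rw [← h1, e_succ, ih, choose_two_succ]
    push_cast; ring

lemma e_key (n : ℤ) (m : ℕ) : e n + (m.choose 2 : ℤ) + (n + 1) * m = e (n + m) + m := by
  have h2 : (2:ℤ) ≠ 0 := by norm_num
  apply mul_left_cancel₀ h2
  have h3 := two_e n
  have h4 := two_e ((m:ℤ))
  have h5 := two_e (n + m)
  rw [← e_nat]
  nlinarith [h3, h4, h5]

end JTPx
namespace JTPx
open Real Filter Finset

lemma summable_of_pos_ratio {f : ℕ → ℝ} (hpos : ∀ n, 0 < f n) {r : ℕ → ℝ}
    (hr : ∀ n, f (n + 1) = r n * f n) (h0 : Tendsto r atTop (nhds 0)) : Summable f := by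
  apply summable_of_ratio_norm_eventually_le (r := 1/2) (by norm_num)
  have hev : ∀ᶠ n in atTop, |r n| ≤ 1/2 := by
    have h1 : Tendsto (fun n => |r n|) atTop (nhds 0) := by
      have := h0.abs; simpa using this
    exact h1.eventually_le_const (by norm_num)
  filter_upwards [hev] with n hn
  rw [Real.norm_eq_abs, Real.norm_eq_abs, hr n, abs_mul, abs_of_pos (hpos n)]
  exact mul_le_mul_of_nonneg_right hn (hpos n).le

lemma theta_abs_summable {p b : ℝ} (hp : 0 < p) (hp1 : p < 1) (hb : 0 < b) (hb1 : b < 1) :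
    Summable fun n : ℤ => b ^ n * p ^ e n := by
  apply Summable.of_nat_of_neg
  · apply summable_of_pos_ratio (r := fun n => b * p ^ n)
    · intro n; exact mul_pos (zpow_pos hb _) (zpow_pos hp _)
    · intro n
      have hc : ((n + 1 : ℕ) : ℤ) = (n : ℤ) + 1 := by push_cast; ring
      rw [hc, e_succ, zpow_add₀ hb.ne', zpow_add₀ hp.ne', zpow_one, zpow_natCast, zpow_natCast]
      ring
    · have := (tendsto_pow_atTop_nhds_zero_of_lt_one hp.le hp1).const_mul b
      simpa using this
  · apply summable_of_pos_ratio (r := fun n => p ^ (n + 1) / b)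
    · intro n; exact mul_pos (zpow_pos hb _) (zpow_pos hp _)
    · intro n
      have hc : -((n + 1 : ℕ) : ℤ) = -(n : ℤ) + (-1) := by push_cast; ring
      have he : e (-(n : ℤ) + (-1)) = e (-(n : ℤ)) + (n : ℤ) + 1 := by
        have h1 := e_succ (-(n : ℤ) + (-1))
        have h2 : (-(n : ℤ) + (-1)) + 1 = -(n : ℤ) := by ring
        rw [h2] at h1
        omega
      rw [hc, he, zpow_add₀ hb.ne', zpow_add₀ hp.ne', zpow_add₀ hp.ne']
      simp only [zpow_neg, zpow_one, zpow_natCast]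
      field_simp
      ring
    · have h1 : Tendsto (fun n : ℕ => p ^ (n + 1)) atTop (nhds 0) :=
        (tendsto_pow_atTop_nhds_zero_of_lt_one hp.le hp1).comp (tendsto_add_atTop_nat 1)
      have := h1.div_const b
      simpa using this

/-- splitting off the first `n` factors of `(p;p)_∞`. -/
lemma A_split {p : ℝ} (hp : 0 < p) (hp1 : p < 1) (n : ℕ) :
    A p (-p) = Qp p n * A p (-(p ^ (n + 1))) := by
  have h1 : |(-p)| < 1 := by rwa [abs_neg, abs_of_pos hp]
  have h2 : |(-(p ^ (n + 1)))| < 1 := by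
    rw [abs_neg, abs_of_pos (pow_pos hp _)]
    exact pow_lt_one₀ hp.le hp1 (Nat.succ_ne_zero n)
  rw [A_eq_exp hp hp1 h1, A_eq_exp hp hp1 h2, LA, LA]
  have hsplit := Summable.sum_add_tsum_nat_add (f := fun k : ℕ => Real.log (1 + (-p) * p ^ k)) n
    (summable_log_one_add hp hp1 h1)
  rw [← hsplit, Real.exp_add]
  congr 1
  · rw [Real.exp_sum, Qp_eq_partial]
    apply Finset.prod_congr rfl
    intro k hk
    exact Real.exp_log (one_add_mul_pow_pos hp hp1 h1 k)
  · congr 1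
    apply tsum_congr
    intro k
    congr 1
    rw [pow_add]
    ring

/-- the shear equivalence of `ℤ × ℕ`. -/
def shear : ℤ × ℕ ≃ ℤ × ℕ where
  toFun x := (x.1 - x.2, x.2)
  invFun x := (x.1 + x.2, x.2)
  left_inv x := by simp
  right_inv x := by simp

/-- **Jacobi triple product** -/
theorem jacobi_triple {p a : ℝ} (hp : 0 < p) (hp1 : p < 1) (ha : a ≠ 0) (ha1 : |a| < 1)
    (hpa : p < |a|) :
    (∑' n : ℤ, a ^ n * p ^ e n) = A p (-p) * A p a * A p (p / a) := by
  have hpn : p ≠ 0 := hp.ne'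
  have hFabs : Summable fun n : ℤ => |a| ^ n * p ^ e n :=
    theta_abs_summable hp hp1 (abs_pos.mpr ha) ha1
  have hpa1 : |p / a| < 1 := by
    rw [abs_div, abs_of_pos hp, div_lt_one (abs_pos.mpr ha)]
    exact hpa
  -- the double-indexed function
  set F₀ : ℤ × ℕ → ℝ := fun x =>
    a ^ x.1 * p ^ e x.1 * (p ^ (x.2.choose 2) * (-(p ^ (x.1 + 1))) ^ x.2 / Qp p x.2)
    with hF₀def
  -- key algebraic identity after shearing
  have hkey : ∀ (k : ℤ) (m : ℕ),
      F₀ (k - m, m) = ((-(p / a)) ^ m / Qp p m) * (a ^ k * p ^ e k) := by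
    intro k m
    have hQ := (Qp_pos hp hp1 m).ne'
    have ham : (a : ℝ) ^ (m : ℕ) ≠ 0 := pow_ne_zero m ha
    have e_id : e (k - m) + ((m.choose 2 : ℕ) : ℤ) + ((k - m) + 1) * m = e k + m := by
      have h := e_key (k - m) m
      rw [show (k - (m:ℤ)) + (m:ℤ) = k by ring] at h
      exact h
    have h1 : (-(p ^ (k - (m:ℤ) + 1))) ^ m = (-1 : ℝ) ^ m * p ^ ((k - m + 1) * (m : ℤ)) := by
      rw [neg_pow, zpow_mul, zpow_natCast]
    have h3 : a ^ (k - (m:ℤ)) = a ^ k / a ^ m := by rw [zpow_sub₀ ha, zpow_natCast]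
    have h4 : (p : ℝ) ^ (m.choose 2) = p ^ ((m.choose 2 : ℕ) : ℤ) := (zpow_natCast p _).symm
    have h5 : (-(p / a)) ^ m = (-1 : ℝ) ^ m * (p ^ m / a ^ m) := by
      rw [neg_pow, div_pow]
    simp only [hF₀def]
    rw [h1, h3, h4, h5]
    have hcomb : (p : ℝ) ^ e (k - (m:ℤ)) * (p ^ ((m.choose 2 : ℕ) : ℤ) *
        ((-1:ℝ) ^ m * p ^ ((k - m + 1) * (m : ℤ)))) = (-1:ℝ)^m * (p ^ e k * p ^ m) := by
      rw [show (p : ℝ) ^ e (k - (m:ℤ)) * (p ^ ((m.choose 2 : ℕ) : ℤ) *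
          ((-1:ℝ) ^ m * p ^ ((k - m + 1) * (m : ℤ))))
          = (-1:ℝ)^m * (p ^ e (k - (m:ℤ)) * p ^ ((m.choose 2 : ℕ) : ℤ) *
            p ^ ((k - m + 1) * (m : ℤ))) by ring]
      congr 1
      rw [← zpow_add₀ hpn, ← zpow_add₀ hpn, e_id, zpow_add₀ hpn, zpow_natCast]
    rw [zpow_natCast p (m.choose 2)] at hcomb
    field_simp
    exact mul_left_cancel₀ (pow_ne_zero m (by norm_num : (-1:ℝ) ≠ 0))
      (by rw [← zpow_natCast p (m.choose 2)] at hcomb; linear_combination hcomb)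
  have ha' : 0 < |a| := abs_pos.mpr ha
  have hSsum : Summable fun m : ℕ => (p / |a|) ^ m / Qp p m := by
    apply S_summable hp hp1
    rw [abs_of_pos (div_pos hp ha'), div_lt_one ha']
    exact hpa
  have habs2 : ∀ x : ℤ × ℕ, |F₀ (shear x)|
      = (|a| ^ x.1 * p ^ e x.1) * ((p / |a|) ^ x.2 / Qp p x.2) := by
    rintro ⟨k, m⟩
    have hs : shear (k, m) = (k - m, m) := rfl
    rw [hs, hkey k m]
    dsimp only
    rw [abs_mul, abs_div, abs_pow, abs_neg, abs_div, abs_of_pos hp,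
      abs_of_pos (Qp_pos hp hp1 m), abs_mul, abs_zpow', abs_zpow', abs_of_pos hp]
    ring
  have hprod : Summable fun x : ℤ × ℕ =>
      (|a| ^ x.1 * p ^ e x.1) * ((p / |a|) ^ x.2 / Qp p x.2) := by
    apply Summable.mul_of_nonneg hFabs hSsum
    · intro k
      exact mul_nonneg (zpow_pos ha' k).le (zpow_pos hp (e k)).le
    · intro m
      exact div_nonneg (pow_nonneg (div_pos hp ha').le m) (Qp_pos hp hp1 m).le
  have hsum_shear : Summable (F₀ ∘ shear) := by
    rw [← summable_abs_iff]
    exact hprod.congr (fun x => (habs2 x).symm)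
  have hsumF₀ : Summable F₀ := shear.summable_iff.mp hsum_shear
  have hpern : ∀ n : ℤ, Summable fun m : ℕ => F₀ (n, m) := by
    intro n
    exact (T_summable hp hp1 (p := p) (t := -(p ^ (n + 1)))).mul_left (a ^ n * p ^ e n)
  have hT1 : ∀ n : ℕ, A p (-p) * (p ^ n.choose 2 * a ^ n / Qp p n)
      = a ^ ((n : ℤ)) * p ^ e ((n : ℤ)) * T p (-(p ^ ((n : ℤ) + 1))) := by
    intro n
    have hlt : |(-(p ^ (n + 1) : ℝ))| < 1 := by
      rw [abs_neg, abs_of_pos (pow_pos hp _)]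
      exact pow_lt_one₀ hp.le hp1 (Nat.succ_ne_zero n)
    have harg : (p : ℝ) ^ ((n : ℤ) + 1) = p ^ (n + 1) := by
      rw [show ((n : ℤ) + 1) = ((n + 1 : ℕ) : ℤ) by push_cast; ring, zpow_natCast]
    rw [harg, A_split hp hp1 n, euler1 hp hp1 hlt, e_nat, zpow_natCast, zpow_natCast]
    have hQ := (Qp_pos hp hp1 n).ne'
    field_simp
  have hext : (∑' n : ℕ, a ^ ((n : ℤ)) * p ^ e ((n : ℤ)) * T p (-(p ^ ((n : ℤ) + 1))))
      = ∑' n : ℤ, a ^ n * p ^ e n * T p (-(p ^ (n + 1))) := by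
    have hinj : Function.Injective (fun n : ℕ => (n : ℤ)) := Nat.cast_injective
    have hsupp : Function.support (fun n : ℤ => a ^ n * p ^ e n * T p (-(p ^ (n + 1))))
        ⊆ Set.range (fun n : ℕ => (n : ℤ)) := by
      intro n hn
      rcases le_or_gt 0 n with h | h
      · exact ⟨n.toNat, Int.toNat_of_nonneg h⟩
      · exfalso
        apply hn
        obtain ⟨k, hk⟩ := Int.exists_eq_neg_ofNat (by omega : n + 1 ≤ 0)
        show a ^ n * p ^ e n * T p (-(p ^ (n + 1))) = 0
        rw [hk, T_zero hp hp1 k, mul_zero]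
    exact hinj.tsum_eq hsupp
  have hmain : A p (-p) * A p a = S p (-(p / a)) * ∑' n : ℤ, a ^ n * p ^ e n := by
    calc A p (-p) * A p a = A p (-p) * T p a := by rw [euler1 hp hp1 ha1]
      _ = ∑' n : ℕ, A p (-p) * (p ^ n.choose 2 * a ^ n / Qp p n) := by
          rw [T, tsum_mul_left]
      _ = ∑' n : ℕ, a ^ ((n : ℤ)) * p ^ e ((n : ℤ)) * T p (-(p ^ ((n : ℤ) + 1))) :=
          tsum_congr hT1
      _ = ∑' n : ℤ, a ^ n * p ^ e n * T p (-(p ^ (n + 1))) := hext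
      _ = ∑' n : ℤ, ∑' m : ℕ, F₀ (n, m) := by
          apply tsum_congr
          intro n
          rw [T, ← tsum_mul_left]
      _ = ∑' x : ℤ × ℕ, F₀ x := (Summable.tsum_prod' hsumF₀ hpern).symm
      _ = ∑' x : ℤ × ℕ, F₀ (shear x) := (shear.tsum_eq F₀).symm
      _ = ∑' k : ℤ, ∑' m : ℕ, F₀ (shear (k, m)) := Summable.tsum_prod' hsum_shear hsum_shear.prod_factor
      _ = ∑' k : ℤ, (∑' m : ℕ, (-(p / a)) ^ m / Qp p m) * (a ^ k * p ^ e k) := by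
          apply tsum_congr
          intro k
          rw [← tsum_mul_right]
          exact tsum_congr (fun m => hkey k m)
      _ = S p (-(p / a)) * ∑' k : ℤ, a ^ k * p ^ e k := by
          rw [tsum_mul_left]
          rfl
  have he2 : A p (p / a) * S p (-(p / a)) = 1 := by
    have h := euler2 hp hp1 (t := -(p / a)) (by rwa [abs_neg])
    rwa [neg_neg] at h
  calc (∑' n : ℤ, a ^ n * p ^ e n)
      = (A p (p / a) * S p (-(p / a))) * (∑' n : ℤ, a ^ n * p ^ e n) := by
        rw [he2, one_mul]
    _ = A p (p / a) * (S p (-(p / a)) * ∑' n : ℤ, a ^ n * p ^ e n) := by ring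
    _ = A p (p / a) * (A p (-p) * A p a) := by rw [← hmain]
    _ = A p (-p) * A p a * A p (p / a) := by ring

end JTPx
namespace JTPx
open Real Filter Finset

theorem stmt18' (q : ℝ) (hq : 0 < q) (hq1 : q < 1) :
    (∏' n : ℕ, (1 / ((1 - (q ^ 2) ^ (5 * n + 1)) * (1 - (q ^ 2) ^ (5 * n + 4)))))
        * (∑' n : ℤ, q ^ ((5 / 2 : ℝ) * (n : ℝ) ^ 2 + (3 / 2 : ℝ) * (n : ℝ)))
      = (∑' n : ℤ, (-1 : ℝ) ^ n * q ^ ((5 / 2 : ℝ) * (n : ℝ) ^ 2 + (3 / 2 : ℝ) * (n : ℝ)))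
        * (∏' n : ℕ, (1 / ((1 - q ^ (5 * n + 1)) * (1 - q ^ (5 * n + 4))))) ^ 2 := by
  have hqn : q ≠ 0 := hq.ne'
  set p : ℝ := q ^ 5 with hpdef
  have hp : 0 < p := pow_pos hq 5
  have hp1 : p < 1 := pow_lt_one₀ hq.le hq1 (by norm_num)
  -- basic |t| < 1 facts
  have habs : ∀ k : ℕ, k ≠ 0 → |q ^ k| < 1 := fun k hk => by
    rw [abs_of_pos (pow_pos hq k)]; exact pow_lt_one₀ hq.le hq1 hk
  have habsq : |q| < 1 := by rwa [abs_of_pos hq]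
  have habsq4 : |q ^ 4| < 1 := habs 4 (by norm_num)
  have habsnq : |(-q)| < 1 := by rwa [abs_neg]
  have habsnq4 : |(-(q ^ 4))| < 1 := by rwa [abs_neg]
  have habsnp : |(-p)| < 1 := by rwa [abs_neg, abs_of_pos hp]
  -- the five building blocks
  set X0 : ℝ := A p (-p) with hX0
  set X1 : ℝ := A p (-q) with hX1
  set X2 : ℝ := A p q with hX2
  set X3 : ℝ := A p (-(q ^ 4)) with hX3
  set X4 : ℝ := A p (q ^ 4) with hX4
  have hX0pos : 0 < X0 := A_pos hp hp1 habsnp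
  have hX1pos : 0 < X1 := A_pos hp hp1 habsnq
  have hX2pos : 0 < X2 := A_pos hp hp1 habsq
  have hX3pos : 0 < X3 := A_pos hp hp1 habsnq4
  have hX4pos : 0 < X4 := A_pos hp hp1 habsq4
  -- theta term computations
  have hterm : ∀ n : ℤ, (q : ℝ) ^ ((5 / 2 : ℝ) * (n : ℝ) ^ 2 + (3 / 2 : ℝ) * (n : ℝ))
      = (q ^ 4 : ℝ) ^ n * (p : ℝ) ^ (e n) := by
    intro n
    have h2 : ((e n : ℤ) : ℝ) * 2 = (n : ℝ) * ((n : ℝ) - 1) := by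
      have := two_e n
      have h3 : ((2 * e n : ℤ) : ℝ) = ((n * (n - 1) : ℤ) : ℝ) := by exact_mod_cast this
      push_cast at h3
      linarith [h3]
    have hexp : (5 / 2 : ℝ) * (n : ℝ) ^ 2 + (3 / 2 : ℝ) * (n : ℝ)
        = ((4 * n + 5 * e n : ℤ) : ℝ) := by
      push_cast
      nlinarith [h2]
    rw [hexp, Real.rpow_intCast, zpow_add₀ hqn, hpdef,
      ← zpow_natCast q 4, ← zpow_natCast q 5, ← zpow_mul, ← zpow_mul]
    norm_num
  have hterm2 : ∀ n : ℤ, (-1 : ℝ) ^ n * q ^ ((5 / 2 : ℝ) * (n : ℝ) ^ 2 + (3 / 2 : ℝ) * (n : ℝ))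
      = (-(q ^ 4) : ℝ) ^ n * (p : ℝ) ^ (e n) := by
    intro n
    rw [hterm n, show (-(q ^ 4) : ℝ) = (-1) * q ^ 4 by ring, mul_zpow]
    ring
  -- Jacobi specializations
  have hpa4 : p < |q ^ 4| := by
    rw [abs_of_pos (pow_pos hq 4), hpdef]
    nlinarith [pow_pos hq 4]
  have hθp : (∑' n : ℤ, (q : ℝ) ^ ((5 / 2 : ℝ) * (n : ℝ) ^ 2 + (3 / 2 : ℝ) * (n : ℝ)))
      = X0 * X4 * X2 := by
    rw [tsum_congr hterm,
      jacobi_triple hp hp1 (pow_ne_zero 4 hqn) habsq4 hpa4]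
    have : p / q ^ 4 = q := by
      rw [hpdef]; field_simp
    rw [this]
  have hθm : (∑' n : ℤ, (-1 : ℝ) ^ n * q ^ ((5 / 2 : ℝ) * (n : ℝ) ^ 2 + (3 / 2 : ℝ) * (n : ℝ)))
      = X0 * X3 * X1 := by
    rw [tsum_congr hterm2,
      jacobi_triple hp hp1 (neg_ne_zero.mpr (pow_ne_zero 4 hqn))
        habsnq4 (by rwa [abs_neg])]
    have : p / (-(q ^ 4)) = -q := by
      rw [hpdef]; field_simp
    rw [this]
  -- factor computations for the products
  have hfac1 : ∀ n : ℕ, (1 : ℝ) - q ^ (5 * n + 1) = 1 + (-q) * p ^ n := by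
    intro n; rw [pow_add, pow_mul, pow_one, hpdef]; ring
  have hfac4 : ∀ n : ℕ, (1 : ℝ) - q ^ (5 * n + 4) = 1 + (-(q ^ 4)) * p ^ n := by
    intro n; rw [pow_add, pow_mul, hpdef]; ring
  have hfacsq : ∀ n : ℕ, (1 : ℝ) - (q ^ 2) ^ (5 * n + 1)
      = (1 + (-q) * p ^ n) * (1 + q * p ^ n) := by
    intro n
    rw [← hfac1 n]
    have h1 : ((q : ℝ) ^ 2) ^ (5 * n + 1) = (q ^ (5 * n + 1)) ^ 2 := by
      rw [← pow_mul, ← pow_mul, Nat.mul_comm]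
    have h2 : (1 : ℝ) + q * p ^ n = 1 + q ^ (5 * n + 1) := by
      rw [pow_add, pow_mul, pow_one, hpdef]; ring
    rw [h1, h2]
    ring
  have hfacsq4 : ∀ n : ℕ, (1 : ℝ) - (q ^ 2) ^ (5 * n + 4)
      = (1 + (-(q ^ 4)) * p ^ n) * (1 + q ^ 4 * p ^ n) := by
    intro n
    rw [← hfac4 n]
    have h1 : ((q : ℝ) ^ 2) ^ (5 * n + 4) = (q ^ (5 * n + 4)) ^ 2 := by
      rw [← pow_mul, ← pow_mul, Nat.mul_comm]
    have h2 : (1 : ℝ) + q ^ 4 * p ^ n = 1 + q ^ (5 * n + 4) := by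
      rw [pow_add, pow_mul, hpdef]; ring
    rw [h1, h2]
    ring
  -- positivity of individual factors
  have hposq := one_add_mul_pow_pos hp hp1 habsnq
  have hposq' := one_add_mul_pow_pos hp hp1 habsq
  have hposq4 := one_add_mul_pow_pos hp hp1 habsnq4
  have hposq4' := one_add_mul_pow_pos hp hp1 habsq4
  -- log summability
  have hlog1 := summable_log_one_add hp hp1 habsnq
  have hlog2 := summable_log_one_add hp hp1 habsq
  have hlog3 := summable_log_one_add hp hp1 habsnq4
  have hlog4 := summable_log_one_add hp hp1 habsq4
  -- the RHS product
  have hR : (∏' n : ℕ, (1 / ((1 - q ^ (5 * n + 1)) * (1 - q ^ (5 * n + 4)))))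
      = (X1 * X3)⁻¹ := by
    have hpos : ∀ (_ : Unit) (n : ℕ),
        0 < 1 / ((1 - q ^ (5 * n + 1)) * (1 - q ^ (5 * n + 4))) := by
      intro _ n
      rw [hfac1 n, hfac4 n]
      exact div_pos one_pos (mul_pos (hposq n) (hposq4 n))
    have hlogeq : ∀ n : ℕ, Real.log (1 / ((1 - q ^ (5 * n + 1)) * (1 - q ^ (5 * n + 4))))
        = -(Real.log (1 + (-q) * p ^ n) + Real.log (1 + (-(q ^ 4)) * p ^ n)) := by
      intro n
      rw [hfac1 n, hfac4 n, one_div, Real.log_inv,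
        Real.log_mul (hposq n).ne' (hposq4 n).ne']
    have hsummz : ∀ (_ : Unit), Summable fun n : ℕ =>
        Real.log (1 / ((1 - q ^ (5 * n + 1)) * (1 - q ^ (5 * n + 4)))) := by
      intro _
      exact ((hlog1.add hlog3).neg).congr fun n => (hlogeq n).symm
    have h := Real.rexp_tsum_eq_tprod (hpos ()) (hsummz ())
    rw [← h]
    have hts : (∑' n : ℕ, Real.log (1 / ((1 - q ^ (5 * n + 1)) * (1 - q ^ (5 * n + 4)))))
        = -(LA p (-q) + LA p (-(q ^ 4))) := by
      rw [tsum_congr hlogeq, tsum_neg, Summable.tsum_add hlog1 hlog3]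
      rfl
    rw [hts, Real.exp_neg, Real.exp_add, hX1, hX3, A_eq_exp hp hp1 habsnq,
      A_eq_exp hp hp1 habsnq4]
  -- the LHS product
  have hR2 : (∏' n : ℕ, (1 / ((1 - (q ^ 2) ^ (5 * n + 1)) * (1 - (q ^ 2) ^ (5 * n + 4)))))
      = (X1 * X2 * X3 * X4)⁻¹ := by
    have hpos : ∀ (_ : Unit) (n : ℕ),
        0 < 1 / ((1 - (q ^ 2) ^ (5 * n + 1)) * (1 - (q ^ 2) ^ (5 * n + 4))) := by
      intro _ n
      rw [hfacsq n, hfacsq4 n]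
      exact div_pos one_pos (mul_pos (mul_pos (hposq n) (hposq' n))
        (mul_pos (hposq4 n) (hposq4' n)))
    have hlogeq : ∀ n : ℕ,
        Real.log (1 / ((1 - (q ^ 2) ^ (5 * n + 1)) * (1 - (q ^ 2) ^ (5 * n + 4))))
        = -((Real.log (1 + (-q) * p ^ n) + Real.log (1 + q * p ^ n))
            + (Real.log (1 + (-(q ^ 4)) * p ^ n) + Real.log (1 + q ^ 4 * p ^ n))) := by
      intro n
      rw [hfacsq n, hfacsq4 n, one_div, Real.log_inv,
        Real.log_mul (mul_pos (hposq n) (hposq' n)).ne' (mul_pos (hposq4 n) (hposq4' n)).ne',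
        Real.log_mul (hposq n).ne' (hposq' n).ne',
        Real.log_mul (hposq4 n).ne' (hposq4' n).ne']
    have hsummz : ∀ (_ : Unit), Summable fun n : ℕ =>
        Real.log (1 / ((1 - (q ^ 2) ^ (5 * n + 1)) * (1 - (q ^ 2) ^ (5 * n + 4)))) := by
      intro _
      exact (((hlog1.add hlog2).add (hlog3.add hlog4)).neg).congr fun n => (hlogeq n).symm
    have h := Real.rexp_tsum_eq_tprod (hpos ()) (hsummz ())
    rw [← h]
    have hts : (∑' n : ℕ,
        Real.log (1 / ((1 - (q ^ 2) ^ (5 * n + 1)) * (1 - (q ^ 2) ^ (5 * n + 4)))))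
        = -((LA p (-q) + LA p q) + (LA p (-(q ^ 4)) + LA p (q ^ 4))) := by
      rw [tsum_congr hlogeq, tsum_neg, Summable.tsum_add (hlog1.add hlog2) (hlog3.add hlog4),
        Summable.tsum_add hlog1 hlog2, Summable.tsum_add hlog3 hlog4]
      rfl
    rw [hts, Real.exp_neg, Real.exp_add, Real.exp_add, Real.exp_add,
      hX1, hX2, hX3, hX4, A_eq_exp hp hp1 habsnq, A_eq_exp hp hp1 habsq,
      A_eq_exp hp hp1 habsnq4, A_eq_exp hp hp1 habsq4]
    ring_nf
  -- final assembly
  rw [hR, hR2, hθp, hθm]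
  field_simp

end JTPx

theorem stmt18 (q : ℝ) (hq : 0 < q) (hq1 : q < 1) :
    (∏' n : ℕ, (1 / ((1 - (q ^ 2) ^ (5 * n + 1)) * (1 - (q ^ 2) ^ (5 * n + 4)))))
        * (∑' n : ℤ, q ^ ((5 / 2 : ℝ) * (n : ℝ) ^ 2 + (3 / 2 : ℝ) * (n : ℝ)))
      = (∑' n : ℤ, (-1 : ℝ) ^ n * q ^ ((5 / 2 : ℝ) * (n : ℝ) ^ 2 + (3 / 2 : ℝ) * (n : ℝ)))
        * (∏' n : ℕ, (1 / ((1 - q ^ (5 * n + 1)) * (1 - q ^ (5 * n + 4))))) ^ 2 :=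
  JTPx.stmt18' q hq hq1
end

section
/- For 0 < q < 1, the Rogers–Ramanujan continued fraction value R(q) := q^{1/5} H(q)/G(q) (with G, H the Rogers–Ramanujan products) satisfies R(q²) = q^{1/5} R(q) · θ₃(5/2, 3/2; q)/θ₃(5/2, 1/2; q), equivalently θ₃(5/2,3/2;q)/θ₃(5/2,1/2;q) = q^{−1/5} R(q²)/R(q). -/
open Real Filter Finset Topology

namespace RR19

variable {Q b x q : ℝ}



lemma tprod_exp {f : ℕ → ℝ} (hp : ∀ n, 0 < f n) (hs : Summable fun n => Real.log (f n)) :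
    (∏' n, f n) = Real.exp (∑' n, Real.log (f n)) := by
  have := Real.rexp_tsum_eq_tprod hp hs
  exact this.symm

lemma mult_of_log {f : ℕ → ℝ} (hp : ∀ n, 0 < f n) (hs : Summable fun n => Real.log (f n)) :
    Multipliable f :=
  Real.multipliable_of_summable_log hp hs

lemma abs_log_one_sub_le {y c : ℝ} (h0 : 0 ≤ y) (h1 : y ≤ c) (hc : c < 1) :
    |Real.log (1 - y)| ≤ y / (1 - c) := by
  have hy1 : y < 1 := lt_of_le_of_lt h1 hc
  have hpos : 0 < 1 - y := by linarith
  have hcpos : 0 < 1 - c := by linarith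
  have hlog : Real.log (1 - y) ≤ 0 := Real.log_nonpos (by linarith) (by linarith)
  rw [abs_of_nonpos hlog, ← Real.log_inv]
  have h2 : Real.log (1 - y)⁻¹ ≤ (1 - y)⁻¹ - 1 :=
    Real.log_le_sub_one_of_pos (by positivity)
  have h3 : (1 - y)⁻¹ - 1 = y / (1 - y) := by field_simp; ring
  have h4 : y / (1 - y) ≤ y / (1 - c) := by
    apply div_le_div_of_nonneg_left h0 hcpos; linarith
  linarith

lemma abs_log_one_add_le {y : ℝ} (h0 : 0 ≤ y) : |Real.log (1 + y)| ≤ y := by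
  have : 0 ≤ Real.log (1 + y) := Real.log_nonneg (by linarith)
  rw [abs_of_nonneg this]
  have := Real.log_le_sub_one_of_pos (show (0:ℝ) < 1 + y by linarith)
  linarith


lemma pow_lt_one' {k : ℕ} (hq : 0 < q) (hq1 : q < 1) (hk : 1 ≤ k) : q ^ k < 1 :=
  pow_lt_one₀ hq.le hq1 (by omega)

lemma summable_pow (hq : 0 < q) (hq1 : q < 1) (a c : ℕ) (ha : 1 ≤ a) :
    Summable fun n : ℕ => q ^ (a * n + c) := by
  have : (fun n : ℕ => q ^ (a * n + c)) = fun n => (q ^ a) ^ n * q ^ c := by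
    funext n; rw [← pow_mul, ← pow_add]
  rw [this]
  exact (summable_geometric_of_lt_one (by positivity)
    (pow_lt_one₀ hq.le hq1 (by omega))).mul_right _

lemma pow_ar_lt_one (hq : 0 < q) (hq1 : q < 1) {a c n : ℕ} (hc : 1 ≤ c) :
    q ^ (a * n + c) < 1 := pow_lt_one₀ hq.le hq1 (by omega)

lemma pow_ar_le (hq : 0 < q) (hq1 : q < 1) {a c n : ℕ} (hc : 1 ≤ c) :
    q ^ (a * n + c) ≤ q := by
  calc q ^ (a * n + c) ≤ q ^ 1 := pow_le_pow_of_le_one hq.le hq1.le (by omega)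
  _ = q := pow_one q

lemma summable_log_one_sub (hq : 0 < q) (hq1 : q < 1) (a c : ℕ) (ha : 1 ≤ a) (hc : 1 ≤ c) :
    Summable fun n : ℕ => Real.log (1 - q ^ (a * n + c)) := by
  apply Summable.of_abs
  apply Summable.of_nonneg_of_le (fun n => abs_nonneg _)
    (fun n => abs_log_one_sub_le (by positivity) (pow_ar_le hq hq1 hc) hq1)
  exact (summable_pow hq hq1 a c ha).div_const _

lemma summable_log_one_add (hq : 0 < q) (hq1 : q < 1) (a c : ℕ) (ha : 1 ≤ a) :
    Summable fun n : ℕ => Real.log (1 + q ^ (a * n + c)) := by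
  apply Summable.of_abs
  apply Summable.of_nonneg_of_le (fun n => abs_nonneg _)
    (fun n => abs_log_one_add_le (by positivity))
  exact summable_pow hq hq1 a c ha




/-- partial q-Pochhammer product -/
noncomputable def Fp (Q : ℝ) (n : ℕ) : ℝ := ∏ i ∈ Finset.range n, (1 - Q ^ (i + 1))

/-- Gaussian binomial (real, parameter Q), zero outside range -/
noncomputable def gb (Q : ℝ) (m : ℕ) (k : ℤ) : ℝ :=
  if 0 ≤ k ∧ k ≤ m then Fp Q m / (Fp Q k.toNat * Fp Q (m - k.toNat)) else 0


lemma Fp_pos (hQ0 : 0 < Q) (hQ1 : Q < 1) (n : ℕ) : 0 < Fp Q n := by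
  apply Finset.prod_pos
  intro i _
  have : Q ^ (i + 1) < 1 := pow_lt_one₀ hQ0.le hQ1 (by omega)
  linarith

lemma Fp_succ (n : ℕ) : Fp Q (n + 1) = Fp Q n * (1 - Q ^ (n + 1)) := Finset.prod_range_succ _ _

lemma Fp_le_one (hQ0 : 0 < Q) (hQ1 : Q < 1) (n : ℕ) : Fp Q n ≤ 1 := by
  induction n with
  | zero => simp [Fp]
  | succ n ih =>
    rw [Fp_succ]
    have h1 : 0 < Fp Q n := Fp_pos hQ0 hQ1 n
    have h2 : 0 < Q ^ (n + 1) := pow_pos hQ0 _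
    nlinarith

lemma Fp_anti (hQ0 : 0 < Q) (hQ1 : Q < 1) : Antitone (Fp Q) := by
  apply antitone_nat_of_succ_le
  intro n
  rw [Fp_succ]
  have h1 : 0 < Fp Q n := Fp_pos hQ0 hQ1 n
  have h2 : 0 < Q ^ (n + 1) := pow_pos hQ0 _
  nlinarith

lemma gb_zero {m : ℕ} {k : ℤ} (h : ¬(0 ≤ k ∧ k ≤ m)) : gb Q m k = 0 := by simp [gb, h]

lemma gb_nat {m t : ℕ} (h : t ≤ m) : gb Q m (t : ℤ) = Fp Q m / (Fp Q t * Fp Q (m - t)) := by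
  have h' : ((t : ℤ) ≤ m) := Int.ofNat_le.mpr h
  simp [gb, h', Int.toNat_natCast]

lemma Fp_zero : Fp Q 0 = 1 := by simp [Fp]

lemma gb_zero_right (hQ0 : 0 < Q) (hQ1 : Q < 1) (m : ℕ) : gb Q m 0 = 1 := by
  have h := gb_nat (Q := Q) (Nat.zero_le m)
  simp only [Int.natCast_zero] at h
  rw [h, Fp_zero, one_mul, Nat.sub_zero, div_self (Fp_pos hQ0 hQ1 m).ne']

lemma gb_diag (hQ0 : 0 < Q) (hQ1 : Q < 1) (m : ℕ) : gb Q m m = 1 := by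
  rw [gb_nat le_rfl, Nat.sub_self, Fp_zero, mul_one, div_self (Fp_pos hQ0 hQ1 m).ne']

lemma gb_nonneg (hQ0 : 0 < Q) (hQ1 : Q < 1) (m : ℕ) (k : ℤ) : 0 ≤ gb Q m k := by
  unfold gb
  split
  · have h1 := Fp_pos hQ0 hQ1 m
    have h2 := Fp_pos hQ0 hQ1 k.toNat
    have h3 := Fp_pos hQ0 hQ1 (m - k.toNat)
    positivity
  · exact le_rfl

lemma gb_le (hQ0 : 0 < Q) (hQ1 : Q < 1) {L : ℝ} (hL : 0 < L) (hFL : ∀ n, L ≤ Fp Q n)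
    (m : ℕ) (k : ℤ) : gb Q m k ≤ 1 / (L * L) := by
  unfold gb
  split
  · apply div_le_div₀ (by positivity) (Fp_le_one hQ0 hQ1 m) (by positivity)
    exact mul_le_mul (hFL _) (hFL _) hL.le (Fp_pos hQ0 hQ1 _).le
  · positivity


lemma pow_ne (hQ0 : 0 < Q) (hQ1 : Q < 1) (j : ℕ) : (1 : ℝ) - Q ^ (j + 1) ≠ 0 := by
  have : Q ^ (j + 1) < 1 := pow_lt_one₀ hQ0.le hQ1 (by omega)
  linarith

lemma gb_B (hQ0 : 0 < Q) (hQ1 : Q < 1) (m : ℕ) (k : ℤ) :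
    gb Q (m + 1) k = Q ^ k * gb Q m k + gb Q m (k - 1) := by
  rcases lt_or_ge k 0 with hk | hk
  · rw [gb_zero (by omega), gb_zero (by omega), gb_zero (by omega)]; ring
  · lift k to ℕ using hk with t
    rcases Nat.eq_zero_or_pos t with rfl | ht
    · simp only [Nat.cast_zero]
      rw [gb_zero_right hQ0 hQ1, gb_zero_right hQ0 hQ1,
        gb_zero (m := m) (k := (0:ℤ) - 1) (by omega)]
      simp
    · obtain ⟨u, rfl⟩ : ∃ u, t = u + 1 := ⟨t - 1, by omega⟩
      have hcast : ((u + 1 : ℕ) : ℤ) - 1 = (u : ℤ) := by push_cast; ring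
      rw [hcast, zpow_natCast]
      rcases le_or_gt (u + 1) m with hm | hm
      · obtain ⟨s, rfl⟩ : ∃ s, m = u + 1 + s := ⟨m - (u + 1), by omega⟩
        rw [gb_nat (by omega), gb_nat (by omega), gb_nat (by omega)]
        rw [show u + 1 + s + 1 - (u + 1) = s + 1 by omega,
            show u + 1 + s - (u + 1) = s by omega,
            show u + 1 + s - u = s + 1 by omega]
        rw [show u + 1 + s + 1 = (u + s + 1) + 1 by ring, Fp_succ,
            show u + 1 + s = u + s + 1 by ring,
            show u + 1 = u + 1 by rfl, Fp_succ u, Fp_succ s]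
        have h1 := (Fp_pos hQ0 hQ1 u).ne'
        have h2 := (Fp_pos hQ0 hQ1 s).ne'
        have h3 := (Fp_pos hQ0 hQ1 (u + s + 1)).ne'
        have h4 := pow_ne hQ0 hQ1 u
        have h5 := pow_ne hQ0 hQ1 s
        field_simp
        ring
      · rcases eq_or_lt_of_le (by omega : m ≤ u) with rfl | hl
        · rw [gb_diag hQ0 hQ1 (m + 1), gb_zero (m := m) (k := ((m + 1 : ℕ) : ℤ)) (by omega),
              gb_diag hQ0 hQ1 m]
          ring
        · rw [gb_zero (m := m + 1) (k := ((u + 1 : ℕ) : ℤ)) (by omega),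
              gb_zero (m := m) (k := ((u + 1 : ℕ) : ℤ)) (by omega),
              gb_zero (m := m) (k := (u : ℤ)) (by omega)]
          ring

lemma gb_A (hQ0 : 0 < Q) (hQ1 : Q < 1) (m : ℕ) (k : ℤ) :
    gb Q (m + 1) k = gb Q m k + Q ^ ((m : ℤ) + 1 - k) * gb Q m (k - 1) := by
  rcases lt_or_ge k 0 with hk | hk
  · rw [gb_zero (by omega), gb_zero (by omega), gb_zero (by omega)]; ring
  · lift k to ℕ using hk with t
    rcases Nat.eq_zero_or_pos t with rfl | ht
    · simp only [Nat.cast_zero]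
      rw [gb_zero_right hQ0 hQ1, gb_zero_right hQ0 hQ1,
        gb_zero (m := m) (k := (0:ℤ) - 1) (by omega)]
      simp
    · obtain ⟨u, rfl⟩ : ∃ u, t = u + 1 := ⟨t - 1, by omega⟩
      have hcast : ((u + 1 : ℕ) : ℤ) - 1 = (u : ℤ) := by push_cast; ring
      rw [hcast]
      rcases le_or_gt (u + 1) m with hm | hm
      · obtain ⟨s, rfl⟩ : ∃ s, m = u + 1 + s := ⟨m - (u + 1), by omega⟩
        rw [show ((u+1+s : ℕ):ℤ) + 1 - ((u+1:ℕ):ℤ) = ((s+1 : ℕ) : ℤ) by push_cast; ring,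
            zpow_natCast]
        rw [gb_nat (by omega), gb_nat (by omega), gb_nat (by omega)]
        rw [show u + 1 + s + 1 - (u + 1) = s + 1 by omega,
            show u + 1 + s - (u + 1) = s by omega,
            show u + 1 + s - u = s + 1 by omega]
        rw [show u + 1 + s + 1 = (u + s + 1) + 1 by ring, Fp_succ,
            show u + 1 + s = u + s + 1 by ring, Fp_succ u, Fp_succ s]
        have h1 := (Fp_pos hQ0 hQ1 u).ne'
        have h2 := (Fp_pos hQ0 hQ1 s).ne'
        have h3 := (Fp_pos hQ0 hQ1 (u + s + 1)).ne'
        have h4 := pow_ne hQ0 hQ1 u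
        have h5 := pow_ne hQ0 hQ1 s
        field_simp
        ring
      · rcases eq_or_lt_of_le (by omega : m ≤ u) with rfl | hl
        · rw [show ((m:ℤ) + 1 - ((m+1:ℕ):ℤ)) = 0 by push_cast; ring, zpow_zero]
          rw [gb_diag hQ0 hQ1 (m + 1), gb_zero (m := m) (k := ((m + 1 : ℕ) : ℤ)) (by omega),
              gb_diag hQ0 hQ1 m]
          ring
        · rw [gb_zero (m := m + 1) (k := ((u + 1 : ℕ) : ℤ)) (by omega),
              gb_zero (m := m) (k := ((u + 1 : ℕ) : ℤ)) (by omega),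
              gb_zero (m := m) (k := (u : ℤ)) (by omega)]
          ring

lemma gb_combo (hQ0 : 0 < Q) (hQ1 : Q < 1) (m : ℕ) (k : ℤ) :
    gb Q (m + 2) (k + 1) = Q ^ (k + 1) * gb Q m (k + 1)
      + (1 + Q ^ (m + 1)) * gb Q m k + Q ^ ((m : ℤ) + 1 - k) * gb Q m (k - 1) := by
  rw [show m + 2 = (m + 1) + 1 by ring, gb_A hQ0 hQ1 (m + 1) (k + 1)]
  rw [gb_B hQ0 hQ1 m (k + 1), show k + 1 - 1 = k by ring, gb_B hQ0 hQ1 m k]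
  have hQne : Q ≠ 0 := hQ0.ne'
  have he : ((m + 1 : ℕ) : ℤ) + 1 - (k + 1) = ((m : ℤ) + 1 - k) := by push_cast; ring
  rw [he]
  have hsplit : Q ^ ((m : ℤ) + 1 - k) * Q ^ k = Q ^ (m + 1 : ℕ) := by
    rw [← zpow_add₀ hQne, show (m : ℤ) + 1 - k + k = ((m + 1 : ℕ) : ℤ) by push_cast; ring,
        zpow_natCast]
  calc Q ^ (k+1) * gb Q m (k+1) + gb Q m k + Q ^ ((m:ℤ)+1-k) * (Q ^ k * gb Q m k + gb Q m (k-1))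
      = Q ^ (k+1) * gb Q m (k+1) + gb Q m k + (Q ^ ((m:ℤ)+1-k) * Q ^ k) * gb Q m k
        + Q ^ ((m:ℤ)+1-k) * gb Q m (k-1) := by ring
    _ = _ := by rw [hsplit]; ring

/-- coefficients of the finite triple product -/
noncomputable def cf (b : ℝ) (N : ℕ) (n : ℤ) : ℝ := b ^ (n ^ 2) * gb (b ^ 2) (2 * N) ((N : ℤ) + n)

lemma sq_lt_one (hb0 : 0 < b) (hb1 : b < 1) : b ^ 2 < 1 := pow_lt_one₀ hb0.le hb1 (by omega)

lemma cf_zero {N : ℕ} {n : ℤ} (h : N < n.natAbs) : cf b N n = 0 := by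
  unfold cf
  rw [gb_zero (by omega)]
  ring

lemma cf_support (N : ℕ) (y : ℝ) :
    ∀ n : ℤ, n ∉ Finset.Icc (-(N : ℤ)) (N : ℤ) → cf b N n * y ^ n = 0 := by
  intro n hn
  rw [cf_zero (by simp [Finset.mem_Icc] at hn; omega)]
  ring

lemma cf_summable (N : ℕ) (y : ℝ) : Summable fun n : ℤ => cf b N n * y ^ n :=
  summable_of_ne_finset_zero (cf_support N y)

lemma cf_rec (hb0 : 0 < b) (hb1 : b < 1) (N : ℕ) (n : ℤ) :
    cf b (N + 1) n = b ^ (2 * N + 1) * cf b N (n + 1) + (1 + b ^ (4 * N + 2)) * cf b N n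
      + b ^ (2 * N + 1) * cf b N (n - 1) := by
  have hQ0 : (0:ℝ) < b ^ 2 := by positivity
  have hQ1 : b ^ 2 < 1 := sq_lt_one hb0 hb1
  have hbne : b ≠ 0 := hb0.ne'
  unfold cf
  rw [show 2 * (N + 1) = 2 * N + 2 by ring, show ((N:ℕ) + 1 : ℕ) = N + 1 from rfl]
  rw [show (((N + 1 : ℕ)) : ℤ) + n = ((N : ℤ) + n) + 1 by push_cast; ring]
  rw [gb_combo hQ0 hQ1 (2 * N) ((N : ℤ) + n)]
  -- now expand powers of b^2
  have hz1 : (b ^ 2) ^ ((N : ℤ) + n + 1) = b ^ (2 * ((N : ℤ) + n + 1)) := by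
    rw [← zpow_natCast b 2, ← zpow_mul]; norm_num
  have hz2 : ((b ^ 2) : ℝ) ^ (2 * N + 1 : ℕ) = b ^ (4 * N + 2 : ℕ) := by
    rw [← pow_mul]; ring_nf
  have hz3 : (b ^ 2) ^ (((2 * N : ℕ) : ℤ) + 1 - ((N : ℤ) + n)) = b ^ (2 * ((N : ℤ) + 1 - n)) := by
    rw [← zpow_natCast b 2, ← zpow_mul]
    congr 1
    push_cast
    ring
  rw [hz1, hz2, hz3]
  have e1 : b ^ (n ^ 2) * (b ^ (2 * ((N : ℤ) + n + 1)) * gb (b ^ 2) (2 * N) ((N:ℤ) + n + 1))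
      = b ^ (2 * N + 1 : ℕ) * (b ^ ((n + 1) ^ 2) * gb (b ^ 2) (2 * N) ((N:ℤ) + (n + 1))) := by
    rw [show ((N:ℤ) + n + 1) = ((N:ℤ) + (n+1)) by ring]
    have : b ^ (n ^ 2) * b ^ (2 * ((N : ℤ) + (n+1))) = b ^ (2 * N + 1 : ℕ) * b ^ ((n + 1) ^ 2) := by
      rw [← zpow_add₀ hbne, ← zpow_natCast b (2 * N + 1), ← zpow_add₀ hbne]
      congr 1
      push_cast
      ring
    calc b ^ (n ^ 2) * (b ^ (2 * ((N : ℤ) + (n+1))) * gb (b ^ 2) (2 * N) ((N:ℤ) + (n + 1)))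
        = (b ^ (n ^ 2) * b ^ (2 * ((N : ℤ) + (n+1)))) * gb (b ^ 2) (2 * N) ((N:ℤ) + (n + 1)) := by
          ring
      _ = _ := by rw [this]; ring
  have e3 : b ^ (n ^ 2) * (b ^ (2 * ((N : ℤ) + 1 - n)) * gb (b ^ 2) (2 * N) ((N:ℤ) + n - 1))
      = b ^ (2 * N + 1 : ℕ) * (b ^ ((n - 1) ^ 2) * gb (b ^ 2) (2 * N) ((N:ℤ) + (n - 1))) := by
    rw [show ((N:ℤ) + n - 1) = ((N:ℤ) + (n-1)) by ring]
    have : b ^ (n ^ 2) * b ^ (2 * ((N : ℤ) + 1 - n)) = b ^ (2 * N + 1 : ℕ) * b ^ ((n - 1) ^ 2) := by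
      rw [← zpow_add₀ hbne, ← zpow_natCast b (2 * N + 1), ← zpow_add₀ hbne]
      congr 1
      push_cast
      ring
    calc b ^ (n ^ 2) * (b ^ (2 * ((N : ℤ) + 1 - n)) * gb (b ^ 2) (2 * N) ((N:ℤ) + (n - 1)))
        = (b ^ (n ^ 2) * b ^ (2 * ((N : ℤ) + 1 - n))) * gb (b ^ 2) (2 * N) ((N:ℤ) + (n - 1)) := by
          ring
      _ = _ := by rw [this]; ring
  calc b ^ n ^ 2 * (b ^ (2 * ((N:ℤ) + n + 1)) * gb (b ^ 2) (2 * N) ((N:ℤ) + n + 1)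
        + (1 + b ^ (4 * N + 2 : ℕ)) * gb (b ^ 2) (2 * N) ((N:ℤ) + n)
        + b ^ (2 * ((N:ℤ) + 1 - n)) * gb (b ^ 2) (2 * N) ((N:ℤ) + n - 1))
      = b ^ (n ^ 2) * (b ^ (2 * ((N : ℤ) + n + 1)) * gb (b ^ 2) (2 * N) ((N:ℤ) + n + 1))
        + (1 + b ^ (4 * N + 2 : ℕ)) * (b ^ (n ^ 2) * gb (b ^ 2) (2 * N) ((N:ℤ) + n))
        + b ^ (n ^ 2) * (b ^ (2 * ((N : ℤ) + 1 - n)) * gb (b ^ 2) (2 * N) ((N:ℤ) + n - 1)) := by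
        ring
    _ = _ := by rw [e1, e3]

variable {b x : ℝ}

lemma finJTP (hb0 : 0 < b) (hb1 : b < 1) (hx : 0 < x) (N : ℕ) :
    (∑' n : ℤ, cf b N n * x ^ n)
      = ∏ j ∈ Finset.range N, ((1 + x * b ^ (2 * j + 1)) * (1 + x⁻¹ * b ^ (2 * j + 1))) := by
  have hQ0 : (0:ℝ) < b ^ 2 := by positivity
  have hQ1 : b ^ 2 < 1 := sq_lt_one hb0 hb1
  have hxne : x ≠ 0 := hx.ne'
  induction N with
  | zero =>
    simp only [Finset.range_zero, Finset.prod_empty]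
    rw [tsum_eq_single 0 (fun n hn => by
      rw [cf_zero (by simpa using Int.natAbs_pos.mpr hn)]; ring)]
    unfold cf
    simp only [Nat.mul_zero, Nat.cast_zero, add_zero, zero_add]
    rw [gb_zero_right hQ0 hQ1]
    norm_num
  | succ N ih =>
    rw [Finset.prod_range_succ, ← ih]
    have hS : Summable fun n : ℤ => cf b N n * x ^ n := cf_summable N x
    have sgen : ∀ d : ℤ, Summable fun n : ℤ => cf b N (n + d) * x ^ (n + d) := by
      intro d
      apply summable_of_ne_finset_zero (s := Finset.Icc (-(N : ℤ) - d) ((N : ℤ) - d))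
      intro n hn
      rw [cf_zero (n := n + d) (by simp [Finset.mem_Icc] at hn; omega)]
      ring
    have s1 : Summable fun n : ℤ => cf b N (n + 1) * x ^ (n + 1) := sgen 1
    have s2 : Summable fun n : ℤ => cf b N (n - 1) * x ^ (n - 1) := by
      simpa [sub_eq_add_neg] using sgen (-1)
    have key : ∀ n : ℤ, cf b (N + 1) n * x ^ n
        = (b ^ (2 * N + 1) * x⁻¹ * (cf b N (n + 1) * x ^ (n + 1))
            + (1 + b ^ (4 * N + 2)) * (cf b N n * x ^ n))
          + b ^ (2 * N + 1) * x * (cf b N (n - 1) * x ^ (n - 1)) := by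
      intro n
      rw [cf_rec hb0 hb1, zpow_add₀ hxne n 1, zpow_sub₀ hxne n 1, zpow_one]
      field_simp
    rw [tsum_congr key, Summable.tsum_add (((s1.mul_left _).add (hS.mul_left _))) (s2.mul_left _),
        Summable.tsum_add (s1.mul_left _) (hS.mul_left _), tsum_mul_left, tsum_mul_left, tsum_mul_left]
    have e1 : (∑' n : ℤ, cf b N (n + 1) * x ^ (n + 1)) = ∑' n : ℤ, cf b N n * x ^ n := by
      simpa using (Equiv.addRight (1 : ℤ)).tsum_eq (fun m => cf b N m * x ^ m)
    have e2 : (∑' n : ℤ, cf b N (n - 1) * x ^ (n - 1)) = ∑' n : ℤ, cf b N n * x ^ n := by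
      simpa using (Equiv.subRight (1 : ℤ)).tsum_eq (fun m => cf b N m * x ^ m)
    rw [e1, e2]
    field_simp
    ring
variable {b x : ℝ}

/-- the limit Pochhammer product for parameter b² -/
noncomputable def Linf (b : ℝ) : ℝ := ∏' i : ℕ, (1 - (b ^ 2) ^ (i + 1))

lemma summable_log_Fp (hb0 : 0 < b) (hb1 : b < 1) :
    Summable fun i : ℕ => Real.log (1 - (b ^ 2) ^ (i + 1)) := by
  have := summable_log_one_sub (q := b ^ 2) (by positivity) (sq_lt_one hb0 hb1) 1 1 le_rfl le_rfl
  simpa only [one_mul] using this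

lemma Linf_eq_exp (hb0 : 0 < b) (hb1 : b < 1) :
    Linf b = Real.exp (∑' i : ℕ, Real.log (1 - (b ^ 2) ^ (i + 1))) := by
  apply tprod_exp (fun i => by
    have : (b ^ 2) ^ (i + 1) < 1 := pow_lt_one₀ (by positivity) (sq_lt_one hb0 hb1) (by omega)
    linarith) (summable_log_Fp hb0 hb1)

lemma Linf_pos (hb0 : 0 < b) (hb1 : b < 1) : 0 < Linf b := by
  rw [Linf_eq_exp hb0 hb1]; exact Real.exp_pos _

lemma Fp_tendsto (hb0 : 0 < b) (hb1 : b < 1) :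
    Tendsto (fun N : ℕ => Fp (b ^ 2) N) atTop (𝓝 (Linf b)) := by
  have hm : Multipliable fun i : ℕ => (1 - (b ^ 2) ^ (i + 1)) :=
    mult_of_log (fun i => by
      have : (b ^ 2) ^ (i + 1) < 1 := pow_lt_one₀ (by positivity) (sq_lt_one hb0 hb1) (by omega)
      linarith) (summable_log_Fp hb0 hb1)
  exact hm.hasProd.tendsto_prod_nat

lemma Fp_ge_Linf (hb0 : 0 < b) (hb1 : b < 1) (n : ℕ) : Linf b ≤ Fp (b ^ 2) n := by
  have hQ0 : (0:ℝ) < b ^ 2 := by positivity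
  have hQ1 := sq_lt_one hb0 hb1
  refine le_of_tendsto (Fp_tendsto hb0 hb1) ?_
  exact eventually_atTop.2 ⟨n, fun m hm => Fp_anti hQ0 hQ1 hm⟩

lemma summable_theta_nat (hb0 : 0 < b) (hb1 : b < 1) {y : ℝ} (hy : 0 < y) :
    Summable fun n : ℕ => b ^ (n ^ 2) * y ^ n := by
  apply summable_of_ratio_norm_eventually_le (r := 1 / 2) (by norm_num)
  have ht : Tendsto (fun n : ℕ => (b ^ 2) ^ n * (b * y)) atTop (𝓝 0) := by
    simpa using (tendsto_pow_atTop_nhds_zero_of_lt_one (by positivity)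
      (sq_lt_one hb0 hb1)).mul_const (b * y)
  filter_upwards [ht.eventually_lt_const (by norm_num : (0:ℝ) < 1/2)] with n hn
  have key : b ^ ((n + 1) ^ 2) * y ^ (n + 1) = ((b ^ 2) ^ n * (b * y)) * (b ^ (n ^ 2) * y ^ n) := by
    rw [show (n + 1) ^ 2 = n ^ 2 + (2 * n + 1) by ring, pow_add, pow_succ, ← pow_mul]
    ring
  rw [Real.norm_eq_abs, Real.norm_eq_abs, key, abs_mul,
      abs_of_nonneg (by positivity : (0:ℝ) ≤ (b ^ 2) ^ n * (b * y))]
  apply mul_le_mul_of_nonneg_right hn.le (abs_nonneg _)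

lemma summable_theta (hb0 : 0 < b) (hb1 : b < 1) (hx : 0 < x) :
    Summable fun n : ℤ => b ^ (n ^ 2) * x ^ n := by
  apply Summable.of_nat_of_neg
  · apply (summable_theta_nat hb0 hb1 hx).congr
    intro n
    rw [show ((n : ℤ) ^ 2) = ((n ^ 2 : ℕ) : ℤ) by push_cast; ring, zpow_natCast, zpow_natCast]
  · apply (summable_theta_nat hb0 hb1 (inv_pos.mpr hx)).congr
    intro n
    rw [show ((-n : ℤ) ^ 2) = ((n ^ 2 : ℕ) : ℤ) by push_cast; ring, zpow_natCast,
        zpow_neg, zpow_natCast, inv_pow]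

lemma cf_tendsto (hb0 : 0 < b) (hb1 : b < 1) (hx : 0 < x) (n : ℤ) :
    Tendsto (fun N : ℕ => cf b N n * x ^ n) atTop
      (𝓝 ((b ^ (n ^ 2) * x ^ n) * (Linf b / (Linf b * Linf b)))) := by
  have hQ0 : (0:ℝ) < b ^ 2 := by positivity
  have hQ1 := sq_lt_one hb0 hb1
  have hL := Linf_pos hb0 hb1
  have h2N : Tendsto (fun N : ℕ => Fp (b ^ 2) (2 * N)) atTop (𝓝 (Linf b)) :=
    (Fp_tendsto hb0 hb1).comp (tendsto_atTop_atTop.2 fun B => ⟨B, fun N hN => by omega⟩)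
  have hplus : Tendsto (fun N : ℕ => Fp (b ^ 2) (((N : ℤ) + n).toNat)) atTop (𝓝 (Linf b)) :=
    (Fp_tendsto hb0 hb1).comp (tendsto_atTop_atTop.2 fun B => ⟨B + n.natAbs, fun N hN => by omega⟩)
  have hminus : Tendsto (fun N : ℕ => Fp (b ^ 2) (2 * N - ((N : ℤ) + n).toNat)) atTop
      (𝓝 (Linf b)) :=
    (Fp_tendsto hb0 hb1).comp (tendsto_atTop_atTop.2 fun B => ⟨B + n.natAbs, fun N hN => by omega⟩)
  have hdiv := h2N.div (hplus.mul hminus) (by positivity)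
  have hlim := hdiv.const_mul (b ^ (n ^ 2) * x ^ n)
  rw [show (b ^ (n ^ 2) * x ^ n) * (Linf b / (Linf b * Linf b))
      = (b ^ (n ^ 2) * x ^ n) * (Linf b / (Linf b * Linf b)) from rfl]
  refine Tendsto.congr' ?_ hlim
  filter_upwards [eventually_ge_atTop n.natAbs] with N hN
  have hcond : 0 ≤ (N : ℤ) + n ∧ (N : ℤ) + n ≤ ((2 * N : ℕ) : ℤ) := by omega
  simp only [Pi.div_apply]
  unfold cf gb
  rw [if_pos hcond]
  ring

lemma cf_bound (hb0 : 0 < b) (hb1 : b < 1) (hx : 0 < x) (N : ℕ) (n : ℤ) :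
    ‖cf b N n * x ^ n‖ ≤ (b ^ (n ^ 2) * x ^ n) * (1 / (Linf b * Linf b)) := by
  have hQ0 : (0:ℝ) < b ^ 2 := by positivity
  have hQ1 := sq_lt_one hb0 hb1
  have hL := Linf_pos hb0 hb1
  have hgb0 := gb_nonneg hQ0 hQ1 (2 * N) ((N : ℤ) + n)
  have hb2 : (0:ℝ) < b ^ (n ^ 2) := zpow_pos hb0 _
  have hx2 : (0:ℝ) < x ^ n := zpow_pos hx _
  rw [Real.norm_eq_abs, abs_of_nonneg (by unfold cf; positivity)]
  unfold cf
  calc b ^ (n ^ 2) * gb (b ^ 2) (2 * N) ((N : ℤ) + n) * x ^ n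
      ≤ b ^ (n ^ 2) * (1 / (Linf b * Linf b)) * x ^ n := by
        apply mul_le_mul_of_nonneg_right _ hx2.le
        apply mul_le_mul_of_nonneg_left _ hb2.le
        exact gb_le hQ0 hQ1 hL (Fp_ge_Linf hb0 hb1) (2 * N) ((N : ℤ) + n)
    _ = (b ^ (n ^ 2) * x ^ n) * (1 / (Linf b * Linf b)) := by ring

theorem jtp (hb0 : 0 < b) (hb1 : b < 1) (hx : 0 < x) :
    (∑' n : ℤ, b ^ (n ^ 2) * x ^ n)
      = Linf b * ((∏' j : ℕ, (1 + x * b ^ (2 * j + 1))) * ∏' j : ℕ, (1 + x⁻¹ * b ^ (2 * j + 1))) := by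
  have hL := Linf_pos hb0 hb1
  have hΘ := summable_theta hb0 hb1 hx
  -- limit of the sums
  have hsum_lim : Tendsto (fun N : ℕ => ∑' n : ℤ, cf b N n * x ^ n) atTop
      (𝓝 (∑' n : ℤ, (b ^ (n ^ 2) * x ^ n) * (Linf b / (Linf b * Linf b)))) := by
    apply tendsto_tsum_of_dominated_convergence (hΘ.mul_right (1 / (Linf b * Linf b)))
      (cf_tendsto hb0 hb1 hx)
    exact Eventually.of_forall fun N n => cf_bound hb0 hb1 hx N n
  -- multipliability of the two factors
  have hmu : Multipliable fun j : ℕ => (1 + x * b ^ (2 * j + 1)) := by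
    apply mult_of_log (fun j => by positivity)
    apply Summable.of_abs
    apply Summable.of_nonneg_of_le (fun j => abs_nonneg _)
      (fun j => abs_log_one_add_le (by positivity))
    have : Summable fun j : ℕ => (x * b) * (b ^ 2) ^ j := by
      exact (summable_geometric_of_lt_one (by positivity) (sq_lt_one hb0 hb1)).mul_left _
    apply this.congr
    intro j
    rw [pow_add, ← pow_mul]
    ring
  have hmv : Multipliable fun j : ℕ => (1 + x⁻¹ * b ^ (2 * j + 1)) := by
    apply mult_of_log (fun j => by positivity)
    apply Summable.of_abs
    apply Summable.of_nonneg_of_le (fun j => abs_nonneg _)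
      (fun j => abs_log_one_add_le (by positivity))
    have : Summable fun j : ℕ => (x⁻¹ * b) * (b ^ 2) ^ j := by
      exact (summable_geometric_of_lt_one (by positivity) (sq_lt_one hb0 hb1)).mul_left _
    apply this.congr
    intro j
    rw [pow_add, ← pow_mul]
    ring
  have hprod_lim : Tendsto (fun N : ℕ => ∑' n : ℤ, cf b N n * x ^ n) atTop
      (𝓝 ((∏' j : ℕ, (1 + x * b ^ (2 * j + 1))) * ∏' j : ℕ, (1 + x⁻¹ * b ^ (2 * j + 1)))) := by
    rw [← Multipliable.tprod_mul hmu hmv]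
    have := (hmu.mul hmv).hasProd.tendsto_prod_nat
    apply this.congr
    intro N
    exact (finJTP hb0 hb1 hx N).symm
  have huniq := tendsto_nhds_unique hsum_lim hprod_lim
  rw [tsum_mul_right] at huniq
  have hsimp : Linf b / (Linf b * Linf b) = (Linf b)⁻¹ := by field_simp
  rw [hsimp] at huniq
  field_simp at huniq ⊢
  linarith [huniq]
variable {q : ℝ}

lemma tprod_one_add_eq_exp (hq : 0 < q) (hq1 : q < 1) (a c a' c' : ℕ)
    (ha : 1 ≤ a) (hc : 1 ≤ c) (ha' : a' = 2 * a) (hc' : c' = 2 * c) :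
    (∏' n : ℕ, (1 + q ^ (a * n + c)))
      = Real.exp ((∑' n : ℕ, Real.log (1 - q ^ (a' * n + c')))
          - ∑' n : ℕ, Real.log (1 - q ^ (a * n + c))) := by
  subst ha' hc'
  have hpos : ∀ n : ℕ, (0:ℝ) < 1 + q ^ (a * n + c) := fun n => by positivity
  rw [tprod_exp hpos (summable_log_one_add hq hq1 a c ha)]
  congr 1
  rw [← Summable.tsum_sub (summable_log_one_sub hq hq1 (2*a) (2*c) (by omega) (by omega))
      (summable_log_one_sub hq hq1 a c ha hc)]
  apply tsum_congr
  intro n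
  have hne1 : (1:ℝ) - q ^ (a * n + c) ≠ 0 := by
    have := pow_ar_lt_one hq hq1 (a := a) (c := c) (n := n) hc
    linarith
  have hne2 : (1:ℝ) + q ^ (a * n + c) ≠ 0 := (hpos n).ne'
  have hfact : (1:ℝ) - q ^ (2 * a * n + 2 * c)
      = (1 - q ^ (a * n + c)) * (1 + q ^ (a * n + c)) := by
    have : q ^ (2 * a * n + 2 * c) = q ^ (a * n + c) * q ^ (a * n + c) := by
      rw [← pow_add]; ring_nf
    rw [this]; ring
  rw [hfact, Real.log_mul hne1 hne2]
  ring

lemma tprod_pair_eq_exp (hq : 0 < q) (hq1 : q < 1) (a c d : ℕ)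
    (ha : 1 ≤ a) (hc : 1 ≤ c) (hd : 1 ≤ d) :
    (∏' n : ℕ, (1 / ((1 - q ^ (a * n + c)) * (1 - q ^ (a * n + d)))))
      = Real.exp (-(∑' n : ℕ, Real.log (1 - q ^ (a * n + c)))
          - ∑' n : ℕ, Real.log (1 - q ^ (a * n + d))) := by
  have hc1 : ∀ n : ℕ, (0:ℝ) < 1 - q ^ (a * n + c) := fun n => by
    have := pow_ar_lt_one hq hq1 (a := a) (c := c) (n := n) hc; linarith
  have hd1 : ∀ n : ℕ, (0:ℝ) < 1 - q ^ (a * n + d) := fun n => by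
    have := pow_ar_lt_one hq hq1 (a := a) (c := d) (n := n) hd; linarith
  have hpos : ∀ n : ℕ, (0:ℝ) < 1 / ((1 - q ^ (a * n + c)) * (1 - q ^ (a * n + d))) := fun n => by
    have := hc1 n; have := hd1 n; positivity
  have hptw : ∀ n : ℕ, Real.log (1 / ((1 - q ^ (a * n + c)) * (1 - q ^ (a * n + d))))
      = -Real.log (1 - q ^ (a * n + c)) - Real.log (1 - q ^ (a * n + d)) := fun n => by
    rw [one_div, Real.log_inv, Real.log_mul (hc1 n).ne' (hd1 n).ne']; ring
  have hsum : Summable fun n : ℕ =>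
      Real.log (1 / ((1 - q ^ (a * n + c)) * (1 - q ^ (a * n + d)))) := by
    apply Summable.congr (((summable_log_one_sub hq hq1 a c ha hc).neg).sub
      (summable_log_one_sub hq hq1 a d ha hd))
    intro n; rw [hptw n]
  rw [tprod_exp hpos hsum]
  congr 1
  rw [tsum_congr hptw, Summable.tsum_sub ((summable_log_one_sub hq hq1 a c ha hc).neg)
      (summable_log_one_sub hq hq1 a d ha hd), tsum_neg]

lemma theta_half (hq : 0 < q) (hq1 : q < 1) (c : ℝ) (u v : ℕ)
    (hu : c + 5/2 = (u : ℝ)) (hv : 5/2 - c = (v : ℝ)) :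
    (∑' n : ℤ, q ^ ((5 / 2 : ℝ) * (n : ℝ) ^ 2 + c * (n : ℝ)))
      = (∏' i : ℕ, (1 - q ^ (5 * i + 5)))
        * ((∏' j : ℕ, (1 + q ^ (5 * j + u))) * ∏' j : ℕ, (1 + q ^ (5 * j + v))) := by
  have hb0 : 0 < q ^ ((5/2 : ℝ)) := Real.rpow_pos_of_pos hq _
  have hb1 : q ^ ((5/2 : ℝ)) < 1 := Real.rpow_lt_one hq.le hq1 (by norm_num)
  have hx0 : 0 < q ^ c := Real.rpow_pos_of_pos hq _
  set b := q ^ ((5/2 : ℝ)) with hbdef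
  set x := q ^ c with hxdef
  have h1 : (∑' n : ℤ, q ^ ((5 / 2 : ℝ) * (n : ℝ) ^ 2 + c * (n : ℝ)))
      = ∑' n : ℤ, b ^ (n ^ 2) * x ^ (n : ℤ) := by
    apply tsum_congr
    intro n
    rw [← Real.rpow_intCast b (n ^ 2), ← Real.rpow_intCast x n, hbdef, hxdef,
        ← Real.rpow_mul hq.le, ← Real.rpow_mul hq.le, ← Real.rpow_add hq]
    congr 1
    push_cast
    ring
  rw [h1, jtp hb0 hb1 hx0]
  congr 1
  · apply tprod_congr
    intro i
    congr 1
    rw [← Real.rpow_natCast b 2, hbdef, ← Real.rpow_mul hq.le,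
        show (5/2 : ℝ) * (2 : ℕ) = (5 : ℝ) by norm_num,
        ← Real.rpow_natCast (q ^ ((5:ℝ))) (i + 1), ← Real.rpow_mul hq.le,
        ← Real.rpow_natCast q (5 * i + 5)]
    congr 1
    push_cast
    ring
  congr 1
  · apply tprod_congr
    intro j
    congr 1
    rw [← Real.rpow_natCast b (2 * j + 1), hbdef, hxdef, ← Real.rpow_mul hq.le,
        ← Real.rpow_add hq, ← Real.rpow_natCast q (5 * j + u)]
    congr 1
    push_cast
    linear_combination hu
  · apply tprod_congr
    intro j
    congr 1
    rw [← Real.rpow_natCast b (2 * j + 1), hbdef, hxdef, ← Real.rpow_mul hq.le,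
        ← Real.rpow_neg hq.le, ← Real.rpow_add hq, ← Real.rpow_natCast q (5 * j + v)]
    congr 1
    push_cast
    linear_combination hv

end RR19

/-- The Rogers–Ramanujan product `G(q)`. -/
noncomputable def rrG (q : ℝ) : ℝ :=
  ∏' n : ℕ, (1 / ((1 - q ^ (5 * n + 1)) * (1 - q ^ (5 * n + 4))))

/-- The Rogers–Ramanujan product `H(q)`. -/
noncomputable def rrH (q : ℝ) : ℝ :=
  ∏' n : ℕ, (1 / ((1 - q ^ (5 * n + 2)) * (1 - q ^ (5 * n + 3))))

/-- The Rogers–Ramanujan continued fraction value `R(q) = q^{1/5} H(q)/G(q)`. -/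
noncomputable def rrR (q : ℝ) : ℝ := q ^ ((1 : ℝ) / 5) * rrH q / rrG q

open RR19 in
theorem stmt19 (q : ℝ) (hq : 0 < q) (hq1 : q < 1) :
    (∑' n : ℤ, q ^ ((5 / 2 : ℝ) * (n : ℝ) ^ 2 + (3 / 2 : ℝ) * (n : ℝ)))
        / (∑' n : ℤ, q ^ ((5 / 2 : ℝ) * (n : ℝ) ^ 2 + (1 / 2 : ℝ) * (n : ℝ)))
      = q ^ (-(1 : ℝ) / 5) * rrR (q ^ 2) / rrR q := by
  have h2q0 : 0 < q ^ 2 := by positivity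
  have h2q1 : q ^ 2 < 1 := pow_lt_one₀ hq.le hq1 (by omega)
  -- the two theta sums
  rw [theta_half hq hq1 (3 / 2) 4 1 (by norm_num) (by norm_num),
      theta_half hq hq1 (1 / 2) 3 2 (by norm_num) (by norm_num)]
  -- exp forms of products
  have hL5 : (∏' i : ℕ, (1 - q ^ (5 * i + 5)))
      = Real.exp (∑' n : ℕ, Real.log (1 - q ^ (5 * n + 5))) := by
    apply tprod_exp (fun i => by
      have := pow_ar_lt_one hq hq1 (a := 5) (c := 5) (n := i) (by norm_num); linarith)
      (summable_log_one_sub hq hq1 5 5 (by norm_num) (by norm_num))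
  have hP4 := tprod_one_add_eq_exp hq hq1 5 4 10 8 (by norm_num) (by norm_num) rfl rfl
  have hP1 := tprod_one_add_eq_exp hq hq1 5 1 10 2 (by norm_num) (by norm_num) rfl rfl
  have hP3 := tprod_one_add_eq_exp hq hq1 5 3 10 6 (by norm_num) (by norm_num) rfl rfl
  have hP2 := tprod_one_add_eq_exp hq hq1 5 2 10 4 (by norm_num) (by norm_num) rfl rfl
  have hGq : rrG q = Real.exp (-(∑' n : ℕ, Real.log (1 - q ^ (5 * n + 1)))
      - ∑' n : ℕ, Real.log (1 - q ^ (5 * n + 4))) :=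
    tprod_pair_eq_exp hq hq1 5 1 4 (by norm_num) (by norm_num) (by norm_num)
  have hHq : rrH q = Real.exp (-(∑' n : ℕ, Real.log (1 - q ^ (5 * n + 2)))
      - ∑' n : ℕ, Real.log (1 - q ^ (5 * n + 3))) :=
    tprod_pair_eq_exp hq hq1 5 2 3 (by norm_num) (by norm_num) (by norm_num)
  have hconv : ∀ c : ℕ, ∀ n : ℕ, ((q ^ 2) ^ (5 * n + c)) = q ^ (10 * n + 2 * c) := by
    intro c n
    rw [← pow_mul, show 2 * (5 * n + c) = 10 * n + 2 * c by ring]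
  have hG2 : rrG (q ^ 2) = Real.exp (-(∑' n : ℕ, Real.log (1 - q ^ (10 * n + 2)))
      - ∑' n : ℕ, Real.log (1 - q ^ (10 * n + 8))) := by
    have : rrG (q ^ 2) = ∏' n : ℕ, (1 / ((1 - q ^ (10 * n + 2)) * (1 - q ^ (10 * n + 8)))) := by
      apply tprod_congr
      intro n
      rw [hconv 1 n, hconv 4 n]
    rw [this]
    exact tprod_pair_eq_exp hq hq1 10 2 8 (by norm_num) (by norm_num) (by norm_num)
  have hH2 : rrH (q ^ 2) = Real.exp (-(∑' n : ℕ, Real.log (1 - q ^ (10 * n + 4)))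
      - ∑' n : ℕ, Real.log (1 - q ^ (10 * n + 6))) := by
    have : rrH (q ^ 2) = ∏' n : ℕ, (1 / ((1 - q ^ (10 * n + 4)) * (1 - q ^ (10 * n + 6)))) := by
      apply tprod_congr
      intro n
      rw [hconv 2 n, hconv 3 n]
    rw [this]
    exact tprod_pair_eq_exp hq hq1 10 4 6 (by norm_num) (by norm_num) (by norm_num)
  rw [hL5, hP4, hP1, hP3, hP2, rrR, rrR, hGq, hHq, hG2, hH2,
      Real.rpow_def_of_pos hq (-(1 : ℝ) / 5), Real.rpow_def_of_pos hq ((1 : ℝ) / 5),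
      Real.rpow_def_of_pos h2q0 ((1 : ℝ) / 5), Real.log_pow q 2]
  simp only [← Real.exp_add, ← Real.exp_sub]
  rw [Real.exp_eq_exp]
  push_cast
  ring
end
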